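/- arXiv:1701.05686 — 10 statements merged into one kernel-verified Lean document; each statement's English description precedes it below -/
import Mathlib

section
/- Fix an integer n ≥ 2 and define x : {0,…,2n−1} → {0,…,2n−1} by x(j) = 2j+1 for 0 ≤ j ≤ n−1 and x(j) = 2(j−n) for n ≤ j ≤ 2n−1. Then (i) x is a bijection of {0,…,2n−1} onto itself, and (ii) the set of differences { (x(j) − j) mod 2n : j ∈ {0,…,2n−1} } is exactly {1, 2, …, 2n−1}, i.e., every nonzero residue modulo 2n occurs as a difference and 0 does not. (Equivalently, the 2n × 3 array X with columns j ↦ 0, j ↦ j, j ↦ x(j) is a difference covering array DCA*(3,2n;2n) satisfying properties P1 and P2.) -/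
/-- The third-column function of the difference covering array:
`x(j) = 2j+1` for `0 ≤ j ≤ n-1` and `x(j) = 2(j-n)` for `n ≤ j ≤ 2n-1`. -/
def xfun (n j : ℕ) : ℕ := if j < n then 2 * j + 1 else 2 * (j - n)

theorem stmt0 (n : ℕ) (hn : 2 ≤ n) :
    Set.BijOn (xfun n) (Set.Iio (2 * n)) (Set.Iio (2 * n)) ∧
    Finset.image (fun j => (2 * n + xfun n j - j) % (2 * n)) (Finset.range (2 * n))
      = Finset.Ico 1 (2 * n) := by
  constructor
  · refine ⟨?_, ?_, ?_⟩
    · intro j hj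
      simp only [Set.mem_Iio] at *
      simp only [xfun]
      split_ifs <;> omega
    · intro a ha b hb h
      simp only [xfun] at h
      split_ifs at h <;> omega
    · intro k hk
      simp only [Set.mem_Iio] at hk
      by_cases h : k % 2 = 1
      · refine ⟨k / 2, by simp only [Set.mem_Iio]; omega, ?_⟩
        simp only [xfun]
        rw [if_pos (by omega)]
        omega
      · refine ⟨n + k / 2, by simp only [Set.mem_Iio]; omega, ?_⟩
        simp only [xfun]
        rw [if_neg (by omega)]
        omega
  · ext k
    simp only [Finset.mem_image, Finset.mem_range, Finset.mem_Ico]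
    constructor
    · rintro ⟨j, hj, rfl⟩
      simp only [xfun]
      split_ifs with h
      · have h1 : 2 * n + (2 * j + 1) - j = 2 * n + (j + 1) := by omega
        rw [h1, Nat.add_mod_left, Nat.mod_eq_of_lt (by omega)]
        omega
      · have h1 : 2 * n + 2 * (j - n) - j = j := by omega
        rw [h1, Nat.mod_eq_of_lt hj]
        omega
    · intro hk
      by_cases h : k ≤ n
      · refine ⟨k - 1, by omega, ?_⟩
        simp only [xfun]
        rw [if_pos (by omega)]
        have h1 : 2 * n + (2 * (k - 1) + 1) - (k - 1) = 2 * n + k := by omega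
        rw [h1, Nat.add_mod_left, Nat.mod_eq_of_lt (by omega)]
      · refine ⟨k, by omega, ?_⟩
        simp only [xfun]
        rw [if_neg (by omega)]
        have h1 : 2 * n + 2 * (k - n) - k = k := by omega
        rw [h1, Nat.mod_eq_of_lt (by omega)]
end

section
/- Let n ≥ 2 and k ≥ 3, and let Q = [q(i,j)] be a 2n × k array with entries in ℤ_{2n} satisfying properties P1 and P2. Then for every pair of distinct nonzero columns j and j′, the multiset of differences { (q(i,j) − q(i,j′)) mod 2n : 0 ≤ i ≤ 2n−1 } (with repetition retained) equals the multiset {1, 2, …, n−1, n, n, n+1, …, 2n−1}; that is, every nonzero element of ℤ_{2n} occurs exactly once as a difference except the element n, which occurs exactly twice, and 0 never occurs. -/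
theorem stmt1 (n k : ℕ) (hn : 2 ≤ n) (hk : 3 ≤ k)
    (q : Fin (2 * n) → Fin k → ℕ)
    -- entries of the array lie in ℤ_{2n} = {0,…,2n-1}
    (hq : ∀ i j, q i j < 2 * n)
    -- P1: the first column contains only 0
    (hP1a : ∀ i, ∀ j : Fin k, (j : ℕ) = 0 → q i j = 0)
    -- P1: every other column contains each element of ℤ_{2n} exactly once
    (hP1b : ∀ j : Fin k, (j : ℕ) ≠ 0 →
      Finset.image (fun i => q i j) Finset.univ = Finset.range (2 * n))
    -- P2: for distinct nonzero columns the differences cover ℤ_{2n} \ {0}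
    (hP2 : ∀ j j' : Fin k, (j : ℕ) ≠ 0 → (j' : ℕ) ≠ 0 → j ≠ j' →
      Finset.image (fun i => (2 * n + q i j - q i j') % (2 * n)) Finset.univ
        = Finset.Ico 1 (2 * n)) :
    -- Conclusion: the multiset of differences contains n exactly twice, every other
    -- nonzero element of ℤ_{2n} exactly once, and never contains 0
    ∀ j j' : Fin k, (j : ℕ) ≠ 0 → (j' : ℕ) ≠ 0 → j ≠ j' →
      ∀ d : ℕ,
        Multiset.count d
          (Multiset.map (fun i => (2 * n + q i j - q i j') % (2 * n)) Finset.univ.val)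
        = if d = n then 2 else if 1 ≤ d ∧ d < 2 * n then 1 else 0 := by
  intro j j' hj hj' hjj
  obtain ⟨t, ht⟩ : ∃ t, 2 * n = t + 1 := ⟨2 * n - 1, by omega⟩
  set f : Fin (2 * n) → ℕ := fun i => (2 * n + q i j - q i j') % (2 * n) with hf
  set M : Multiset ℕ := Multiset.map f Finset.univ.val with hMdef
  set s : Finset ℕ := Finset.Ico 1 (2 * n) with hsdef
  have himg : Finset.image f Finset.univ = s := hP2 j j' hj hj' hjj
  have htf : M.toFinset = s := by
    rw [hMdef, Multiset.toFinset_map, Finset.val_toFinset, himg]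
  have hcardM : Multiset.card M = 2 * n := by simp [hMdef]
  have hcards : s.card = 2 * n - 1 := by simp [hsdef]
  have hcount_sum : ∑ d ∈ s, M.count d = 2 * n := by
    rw [← htf, Multiset.toFinset_sum_count_eq, hcardM]
  have hge : ∀ d ∈ s, 1 ≤ M.count d := by
    intro d hd
    exact Multiset.one_le_count_iff_mem.2 (Multiset.mem_toFinset.1 (htf ▸ hd))
  have hsplit : ∑ d ∈ s, (M.count d - 1) = 1 := by
    have h1 : ∑ d ∈ s, M.count d = ∑ d ∈ s, ((M.count d - 1) + 1) := by
      refine Finset.sum_congr rfl fun d hd => ?_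
      have := hge d hd; omega
    rw [h1, Finset.sum_add_distrib, Finset.sum_const, smul_eq_mul, mul_one, hcards] at hcount_sum
    omega
  have hex : ∃ d₀ ∈ s, M.count d₀ - 1 ≠ 0 := by
    apply Finset.exists_ne_zero_of_sum_ne_zero
    rw [hsplit]; exact one_ne_zero
  obtain ⟨d₀, hd₀s, hd₀ne⟩ := hex
  have herase : M.count d₀ - 1 + ∑ d ∈ s.erase d₀, (M.count d - 1)
      = ∑ d ∈ s, (M.count d - 1) := Finset.add_sum_erase s (fun d => M.count d - 1) hd₀s
  have hd₀2 : M.count d₀ = 2 := by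
    have h1 := hge d₀ hd₀s
    have h2 : ∑ d ∈ s.erase d₀, (M.count d - 1) ≥ 0 := Nat.zero_le _
    omega
  have hrest0 : ∀ d ∈ s.erase d₀, M.count d - 1 = 0 := by
    have hz : ∑ d ∈ s.erase d₀, (M.count d - 1) = 0 := by omega
    exact fun d hd => (Finset.sum_eq_zero_iff.1 hz) d hd
  have hrest1 : ∀ d ∈ s, d ≠ d₀ → M.count d = 1 := by
    intro d hd hne
    have h1 := hrest0 d (Finset.mem_erase.2 ⟨hne, hd⟩)
    have h2 := hge d hd; omega
  have hMsum1 : M.sum = ∑ d ∈ s, M.count d • d := by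
    rw [← htf]; exact Finset.sum_multiset_count M
  have hMsum2 : M.sum = ∑ i : Fin (2 * n), f i := rfl
  haveI : NeZero (2 * n) := ⟨by omega⟩
  have hcastf : ∀ i : Fin (2 * n), ((f i : ZMod (2 * n)))
      = (q i j : ZMod (2 * n)) - (q i j' : ZMod (2 * n)) := by
    intro i
    have hle : q i j' ≤ 2 * n + q i j := by have := hq i j'; omega
    show (((2 * n + q i j - q i j') % (2 * n) : ℕ) : ZMod (2 * n)) = _
    rw [ZMod.natCast_mod, Nat.cast_sub hle, Nat.cast_add, ZMod.natCast_self, zero_add]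
  have hsumcol : ∀ jj : Fin k, (jj : ℕ) ≠ 0 →
      ∑ i : Fin (2 * n), (q i jj : ZMod (2 * n))
        = ((∑ x ∈ Finset.range (2 * n), x : ℕ) : ZMod (2 * n)) := by
    intro jj hjj0
    have himg' := hP1b jj hjj0
    have hinj := Finset.injOn_of_card_image_eq (f := fun i => q i jj)
      (s := (Finset.univ : Finset (Fin (2 * n))))
      (by rw [himg', Finset.card_range, Finset.card_univ, Fintype.card_fin])
    rw [Nat.cast_sum, ← himg',
      Finset.sum_image (fun a ha b hb h => hinj (Finset.mem_coe.2 ha) (Finset.mem_coe.2 hb) h)]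
  have hMsum0 : ((M.sum : ℕ) : ZMod (2 * n)) = 0 := by
    rw [hMsum2, Nat.cast_sum]
    rw [Finset.sum_congr rfl (fun i _ => hcastf i), Finset.sum_sub_distrib,
      hsumcol j hj, hsumcol j' hj', sub_self]
  have hranges : (∑ x ∈ Finset.range (2 * n), x) = n * (2 * n - 1) := by
    have h2 : (∑ x ∈ Finset.range (2 * n), x) * 2 = 2 * n * (2 * n - 1) :=
      Finset.sum_range_id_mul_two (2 * n)
    have h3 : 2 * n * (2 * n - 1) = (n * (2 * n - 1)) * 2 := by
      have ht' : 2 * n - 1 = t := by omega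
      rw [ht']; ring
    exact Nat.eq_of_mul_eq_mul_right two_pos (by rw [h2, h3])
  have hssum : ∑ d ∈ s, d = n * (2 * n - 1) := by
    rw [hsdef, ← hranges, Finset.sum_Ico_eq_sum_range, ht, Finset.sum_range_succ']
    simp [add_comm]
  have hMsumval : M.sum = n * (2 * n - 1) + d₀ := by
    rw [hMsum1]
    have heq : ∑ d ∈ s, M.count d • d = ∑ d ∈ s, (d + if d = d₀ then d else 0) := by
      refine Finset.sum_congr rfl fun d hd => ?_
      by_cases h : d = d₀
      · subst h; rw [hd₀2, if_pos rfl]; exact two_nsmul d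
      · rw [hrest1 d hd h, if_neg h, one_smul, add_zero]
    rw [heq, Finset.sum_add_distrib, hssum, Finset.sum_ite_eq' s d₀ (fun x => x), if_pos hd₀s]
  have hd₀cast : ((d₀ : ℕ) : ZMod (2 * n)) = ((n : ℕ) : ZMod (2 * n)) := by
    have h1 : ((n * (2 * n - 1) + d₀ : ℕ) : ZMod (2 * n)) = 0 := by
      rw [← hMsumval]; exact hMsum0
    have h2 : ((n * (2 * n - 1) + n : ℕ) : ZMod (2 * n)) = 0 := by
      have hkey : n * (2 * n - 1) + n = n * (2 * n) := by
        have ht' : 2 * n - 1 = t := by omega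
        rw [ht', ht]; ring
      rw [hkey, Nat.cast_mul, ZMod.natCast_self, mul_zero]
    push_cast at h1 h2
    linear_combination h1 - h2
  have hd₀n : d₀ = n := by
    have h1 : d₀ < 2 * n := by
      have := hd₀s; rw [hsdef, Finset.mem_Ico] at this; exact this.2
    have h2 : n < 2 * n := by omega
    calc d₀ = (ZMod.val ((d₀ : ℕ) : ZMod (2 * n))) := (ZMod.val_cast_of_lt h1).symm
      _ = ZMod.val ((n : ℕ) : ZMod (2 * n)) := by rw [hd₀cast]
      _ = n := ZMod.val_cast_of_lt h2
  intro d
  by_cases hdn : d = n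
  · rw [if_pos hdn, hdn, ← hd₀n]
    exact hd₀2
  · rw [if_neg hdn]
    by_cases hds : d ∈ s
    · rw [if_pos (by simpa [hsdef, Finset.mem_Ico] using hds)]
      exact hrest1 d hds (fun h => hdn (h.trans hd₀n))
    · rw [if_neg (by simpa [hsdef, Finset.mem_Ico] using hds)]
      exact Multiset.count_eq_zero_of_notMem
        (fun hmem => hds (htf ▸ Multiset.mem_toFinset.2 hmem))
end

section
/- Fix an integer n ≥ 2 and define x and the blocks B_{j,a} as in the construction. For each fixed j ∈ {0,…,2n−1} \ {n}, the orbit O_j = { B_{j,a} : a ∈ {0,…,2n−1} } is a parallel class: the 2n blocks of O_j are pairwise disjoint and their union is all of V = {0,…,6n−1}; equivalently, every point of V lies in exactly one block of O_j. -/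
def Blk (n j a : ℕ) : Finset ℕ :=
  {a, (j + a) % (2 * n) + 2 * n, (xfun n j + a) % (2 * n) + 4 * n}

lemma mod_inj' (n j a a' : ℕ) (hn : 0 < n) (ha : a < 2 * n) (ha' : a' < 2 * n)
    (h : (j + a) % (2 * n) = (j + a') % (2 * n)) : a = a' := by
  have h2 : Nat.ModEq (2 * n) (j + a) (j + a') := h
  have h3 : Nat.ModEq (2 * n) a a' := Nat.ModEq.add_left_cancel' j h2
  have := h3.eq_of_lt_of_lt ha ha'
  exact this

lemma exists_a (n j t : ℕ) (hn : 0 < n) (hj : j < 2 * n) (ht : t < 2 * n) :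
    ∃ a, a < 2 * n ∧ (j + a) % (2 * n) = t := by
  refine ⟨(t + 2 * n - j) % (2 * n), Nat.mod_lt _ (by omega), ?_⟩
  have h1 : (j + (t + 2 * n - j) % (2 * n)) % (2 * n) = (j + (t + 2 * n - j)) % (2 * n) := by
    conv_rhs => rw [Nat.add_mod]
    rw [Nat.add_mod, Nat.mod_mod_of_dvd _ dvd_rfl]
  rw [h1]
  have : j + (t + 2 * n - j) = t + 2 * n := by omega
  rw [this, Nat.add_mod_right, Nat.mod_eq_of_lt ht]

theorem stmt4 (n : ℕ) (hn : 2 ≤ n) (j : ℕ)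
    (hj : j ∈ (Finset.range (2 * n)).erase n) :
    -- the 2n blocks of the orbit O_j are pairwise disjoint
    (∀ a ∈ Finset.range (2 * n), ∀ a' ∈ Finset.range (2 * n), a ≠ a' →
      Disjoint (Blk n j a) (Blk n j a')) ∧
    -- and their union is all of V = {0,…,6n-1}
    ((Finset.range (2 * n)).biUnion (fun a => Blk n j a) = Finset.range (6 * n)) ∧
    -- equivalently, every point of V lies in exactly one block of O_j
    (∀ v ∈ Finset.range (6 * n), ∃! a, a ∈ Finset.range (2 * n) ∧ v ∈ Blk n j a) := by
  simp only [Finset.mem_erase, Finset.mem_range] at hj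
  obtain ⟨hjn, hj2n⟩ := hj
  have hn0 : 0 < n := by omega
  have hx : xfun n j < 2 * n := by
    unfold xfun; split <;> omega
  have hmem : ∀ a v, v ∈ Blk n j a ↔
      v = a ∨ v = (j + a) % (2 * n) + 2 * n ∨ v = (xfun n j + a) % (2 * n) + 4 * n := by
    intro a v
    simp [Blk]
  have hmod : ∀ b, b % (2 * n) < 2 * n := fun b => Nat.mod_lt _ (by omega)
  -- disjointness
  have hdisj : ∀ a ∈ Finset.range (2 * n), ∀ a' ∈ Finset.range (2 * n), a ≠ a' →
      Disjoint (Blk n j a) (Blk n j a') := by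
    intro a ha a' ha' hne
    simp only [Finset.mem_range] at ha ha'
    rw [Finset.disjoint_left]
    intro v hv hv'
    rw [hmem] at hv hv'
    have m1 := hmod (j + a); have m2 := hmod (j + a')
    have m3 := hmod (xfun n j + a); have m4 := hmod (xfun n j + a')
    rcases hv with h | h | h <;> rcases hv' with h' | h' | h' <;>
      first
      | omega
      | (exact hne (mod_inj' n j a a' hn0 ha ha' (by omega)))
      | (exact hne (mod_inj' n (xfun n j) a a' hn0 ha ha' (by omega)))
  have hex : ∀ v < 6 * n, ∃ a, a < 2 * n ∧ v ∈ Blk n j a := by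
    intro v hv
    rcases lt_or_ge v (2 * n) with h | h
    · exact ⟨v, h, by rw [hmem]; left; rfl⟩
    rcases lt_or_ge v (4 * n) with h4 | h4
    · obtain ⟨a, ha, hae⟩ := exists_a n j (v - 2 * n) hn0 hj2n (by omega)
      exact ⟨a, ha, by rw [hmem]; right; left; omega⟩
    · obtain ⟨a, ha, hae⟩ := exists_a n (xfun n j) (v - 4 * n) hn0 hx (by omega)
      exact ⟨a, ha, by rw [hmem]; right; right; omega⟩
  refine ⟨hdisj, ?_, ?_⟩
  · apply Finset.Subset.antisymm
    · intro v hv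
      simp only [Finset.mem_biUnion, Finset.mem_range] at hv ⊢
      obtain ⟨a, ha, hva⟩ := hv
      rw [hmem] at hva
      have m1 := hmod (j + a); have m3 := hmod (xfun n j + a)
      omega
    · intro v hv
      simp only [Finset.mem_range] at hv
      obtain ⟨a, ha, hva⟩ := hex v hv
      simp only [Finset.mem_biUnion, Finset.mem_range]
      exact ⟨a, ha, hva⟩
  · intro v hv
    simp only [Finset.mem_range] at hv
    obtain ⟨a, ha, hva⟩ := hex v hv
    refine ⟨a, ⟨Finset.mem_range.mpr ha, hva⟩, ?_⟩
    rintro a' ⟨ha', hva'⟩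
    by_contra hne
    exact Finset.disjoint_left.mp
      (hdisj a' ha' a (Finset.mem_range.mpr ha) hne) hva' hva
end

section
/- Fix an integer n ≥ 2 and let H be the 6n × (4n²−2n) block–point incidence matrix of the construction. Then H satisfies the RC-constraint: the inner product over ℤ of any two distinct rows of H is at most 1, and the inner product over ℤ of any two distinct columns of H is at most 1 (equivalently, no two distinct rows have ones in two common positions, and no two distinct columns have ones in two common positions). -/
abbrev ColIdx (n : ℕ) := {p : Fin (2 * n) × Fin (2 * n) // (p.1 : ℕ) ≠ n}

/-- The 6n × (4n²-2n) block–point incidence matrix, with 0/1 entries viewed in ℤ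
so that inner products of rows/columns are counted over ℤ. -/
def HmatZ (n : ℕ) : Matrix (Fin (6 * n)) (ColIdx n) ℤ :=
  fun i p => if (i : ℕ) ∈ Blk n (p.1.1 : ℕ) (p.1.2 : ℕ) then 1 else 0

lemma mod2 {t m : ℕ} (_hm : 0 < m) (h : t < 2 * m) :
    t % m = t ∧ t < m ∨ t % m = t - m ∧ m ≤ t := by
  rcases lt_or_ge t m with h' | h'
  · exact Or.inl ⟨Nat.mod_eq_of_lt h', h'⟩
  · refine Or.inr ⟨?_, h'⟩
    rw [Nat.mod_eq_sub_mod h', Nat.mod_eq_of_lt (by omega)]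

lemma xfun_cases (n j : ℕ) :
    (xfun n j = 2 * j + 1 ∧ j < n) ∨ (xfun n j = 2 * (j - n) ∧ n ≤ j) := by
  unfold xfun; split_ifs with h
  · exact Or.inl ⟨rfl, h⟩
  · exact Or.inr ⟨rfl, by omega⟩

set_option maxHeartbeats 1000000 in
lemma core (n j a j' a' i i' : ℕ) (hn : 2 ≤ n)
    (hj : j < 2*n) (hj' : j' < 2*n) (hjn : j ≠ n) (hjn' : j' ≠ n)
    (ha : a < 2*n) (ha' : a' < 2*n) (hne : i ≠ i')
    (h1 : i ∈ Blk n j a) (h2 : i ∈ Blk n j' a')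
    (h3 : i' ∈ Blk n j a) (h4 : i' ∈ Blk n j' a') : j = j' ∧ a = a' := by
  have hxj : xfun n j < 2*n := by rcases xfun_cases n j with ⟨e, h⟩ | ⟨e, h⟩ <;> omega
  have hxj' : xfun n j' < 2*n := by rcases xfun_cases n j' with ⟨e, h⟩ | ⟨e, h⟩ <;> omega
  have hm1 : (j + a) % (2*n) < 2*n := Nat.mod_lt _ (by omega)
  have hm2 : (j' + a') % (2*n) < 2*n := Nat.mod_lt _ (by omega)
  have hm3 : (xfun n j + a) % (2*n) < 2*n := Nat.mod_lt _ (by omega)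
  have hm4 : (xfun n j' + a') % (2*n) < 2*n := Nat.mod_lt _ (by omega)
  simp only [Blk, Finset.mem_insert, Finset.mem_singleton] at h1 h2 h3 h4
  -- resolve each membership to a single slot equation, using the band of i / i'
  have b1 : i < 2*n ∨ (2*n ≤ i ∧ i < 4*n) ∨ 4*n ≤ i := by clear h1 h2 h3 h4; omega
  have b2 : i' < 2*n ∨ (2*n ≤ i' ∧ i' < 4*n) ∨ 4*n ≤ i' := by clear h1 h2 h3 h4; omega
  rcases b1 with b1 | b1 | b1 <;> rcases b2 with b2 | b2 | b2
  -- band (1,1): both i,i' equal a, contradicting i ≠ i'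
  · have g1 : i = a := by clear h2 h3 h4; omega
    have g2 : i' = a := by clear h1 h2 h4; omega
    omega
  -- band (1,2)
  · have g1 : i = a := by clear h2 h3 h4; omega
    have g2 : i = a' := by clear h1 h3 h4; omega
    have g3 : i' = (j+a) % (2*n) + 2*n := by clear h1 h2 h4; omega
    have g4 : i' = (j'+a') % (2*n) + 2*n := by clear h1 h2 h3; omega
    clear h1 h2 h3 h4 hne b1 b2
    have e1 := mod2 (t := j + a) (m := 2*n) (by omega) (by omega)
    have e2 := mod2 (t := j' + a') (m := 2*n) (by omega) (by omega)
    omega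
  -- band (1,3)
  · have g1 : i = a := by clear h2 h3 h4; omega
    have g2 : i = a' := by clear h1 h3 h4; omega
    have g3 : i' = (xfun n j + a) % (2*n) + 4*n := by clear h1 h2 h4; omega
    have g4 : i' = (xfun n j' + a') % (2*n) + 4*n := by clear h1 h2 h3; omega
    clear h1 h2 h3 h4 hne b1 b2
    have e3 := mod2 (t := xfun n j + a) (m := 2*n) (by omega) (by omega)
    have e4 := mod2 (t := xfun n j' + a') (m := 2*n) (by omega) (by omega)
    have hx := xfun_cases n j
    have hx' := xfun_cases n j'
    omega
  -- band (2,1)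
  · have g1 : i' = a := by clear h1 h2 h4; omega
    have g2 : i' = a' := by clear h1 h2 h3; omega
    have g3 : i = (j+a) % (2*n) + 2*n := by clear h2 h3 h4; omega
    have g4 : i = (j'+a') % (2*n) + 2*n := by clear h1 h3 h4; omega
    clear h1 h2 h3 h4 hne b1 b2
    have e1 := mod2 (t := j + a) (m := 2*n) (by omega) (by omega)
    have e2 := mod2 (t := j' + a') (m := 2*n) (by omega) (by omega)
    omega
  -- band (2,2): contradiction
  · have g1 : i = (j+a) % (2*n) + 2*n := by clear h2 h3 h4; omega
    have g2 : i = (j'+a') % (2*n) + 2*n := by clear h1 h3 h4; omega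
    have g3 : i' = (j+a) % (2*n) + 2*n := by clear h1 h2 h4; omega
    omega
  -- band (2,3)
  · have g1 : i = (j+a) % (2*n) + 2*n := by clear h2 h3 h4; omega
    have g2 : i = (j'+a') % (2*n) + 2*n := by clear h1 h3 h4; omega
    have g3 : i' = (xfun n j + a) % (2*n) + 4*n := by clear h1 h2 h4; omega
    have g4 : i' = (xfun n j' + a') % (2*n) + 4*n := by clear h1 h2 h3; omega
    clear h1 h2 h3 h4 hne b1 b2
    have e1 := mod2 (t := j + a) (m := 2*n) (by omega) (by omega)
    have e2 := mod2 (t := j' + a') (m := 2*n) (by omega) (by omega)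
    have e3 := mod2 (t := xfun n j + a) (m := 2*n) (by omega) (by omega)
    have e4 := mod2 (t := xfun n j' + a') (m := 2*n) (by omega) (by omega)
    have hx := xfun_cases n j
    have hx' := xfun_cases n j'
    omega
  -- band (3,1)
  · have g1 : i' = a := by clear h1 h2 h4; omega
    have g2 : i' = a' := by clear h1 h2 h3; omega
    have g3 : i = (xfun n j + a) % (2*n) + 4*n := by clear h2 h3 h4; omega
    have g4 : i = (xfun n j' + a') % (2*n) + 4*n := by clear h1 h3 h4; omega
    clear h1 h2 h3 h4 hne b1 b2
    have e3 := mod2 (t := xfun n j + a) (m := 2*n) (by omega) (by omega)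
    have e4 := mod2 (t := xfun n j' + a') (m := 2*n) (by omega) (by omega)
    have hx := xfun_cases n j
    have hx' := xfun_cases n j'
    omega
  -- band (3,2)
  · have g1 : i' = (j+a) % (2*n) + 2*n := by clear h1 h2 h4; omega
    have g2 : i' = (j'+a') % (2*n) + 2*n := by clear h1 h2 h3; omega
    have g3 : i = (xfun n j + a) % (2*n) + 4*n := by clear h2 h3 h4; omega
    have g4 : i = (xfun n j' + a') % (2*n) + 4*n := by clear h1 h3 h4; omega
    clear h1 h2 h3 h4 hne b1 b2
    have e1 := mod2 (t := j + a) (m := 2*n) (by omega) (by omega)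
    have e2 := mod2 (t := j' + a') (m := 2*n) (by omega) (by omega)
    have e3 := mod2 (t := xfun n j + a) (m := 2*n) (by omega) (by omega)
    have e4 := mod2 (t := xfun n j' + a') (m := 2*n) (by omega) (by omega)
    have hx := xfun_cases n j
    have hx' := xfun_cases n j'
    omega
  -- band (3,3): contradiction
  · have g1 : i = (xfun n j + a) % (2*n) + 4*n := by clear h2 h3 h4; omega
    have g2 : i = (xfun n j' + a') % (2*n) + 4*n := by clear h1 h3 h4; omega
    have g3 : i' = (xfun n j + a) % (2*n) + 4*n := by clear h1 h2 h4; omega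
    omega

lemma ite_prod (A B : Prop) [Decidable A] [Decidable B] :
    (if A then (1:ℤ) else 0) * (if B then 1 else 0) = if A ∧ B then 1 else 0 := by
  by_cases hA : A <;> by_cases hB : B <;> simp [hA, hB]

theorem stmt6 (n : ℕ) (hn : 2 ≤ n) :
    -- the inner product over ℤ of any two distinct rows of H is at most 1
    (∀ i i' : Fin (6 * n), i ≠ i' →
      (∑ p : ColIdx n, HmatZ n i p * HmatZ n i' p) ≤ 1) ∧
    -- the inner product over ℤ of any two distinct columns of H is at most 1
    (∀ p p' : ColIdx n, p ≠ p' →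
      (∑ i : Fin (6 * n), HmatZ n i p * HmatZ n i p') ≤ 1) := by
  constructor
  · intro i i' hne
    have hrw : ∀ p : ColIdx n, HmatZ n i p * HmatZ n i' p =
        if (i : ℕ) ∈ Blk n (p.1.1 : ℕ) (p.1.2 : ℕ) ∧ (i' : ℕ) ∈ Blk n (p.1.1 : ℕ) (p.1.2 : ℕ)
        then 1 else 0 := fun p => ite_prod _ _
    rw [Finset.sum_congr rfl (fun p _ => hrw p), Finset.sum_boole]
    have hcard : (Finset.univ.filter (fun p : ColIdx n =>
        (i : ℕ) ∈ Blk n (p.1.1 : ℕ) (p.1.2 : ℕ) ∧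
        (i' : ℕ) ∈ Blk n (p.1.1 : ℕ) (p.1.2 : ℕ))).card ≤ 1 := by
      apply Finset.card_le_one.mpr
      intro p hp q hq
      simp only [Finset.mem_filter, Finset.mem_univ, true_and] at hp hq
      have hvne : (i : ℕ) ≠ (i' : ℕ) := fun h => hne (Fin.ext h)
      obtain ⟨hja, haa⟩ := core n p.1.1 p.1.2 q.1.1 q.1.2 (i : ℕ) (i' : ℕ) hn
        p.1.1.isLt q.1.1.isLt p.2 q.2 p.1.2.isLt q.1.2.isLt hvne
        hp.1 hq.1 hp.2 hq.2
      exact Subtype.ext (Prod.ext (Fin.ext hja) (Fin.ext haa))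
    exact_mod_cast hcard
  · intro p p' hne
    have hrw : ∀ i : Fin (6 * n), HmatZ n i p * HmatZ n i p' =
        if (i : ℕ) ∈ Blk n (p.1.1 : ℕ) (p.1.2 : ℕ) ∧ (i : ℕ) ∈ Blk n (p'.1.1 : ℕ) (p'.1.2 : ℕ)
        then 1 else 0 := fun i => ite_prod _ _
    rw [Finset.sum_congr rfl (fun i _ => hrw i), Finset.sum_boole]
    have hcard : (Finset.univ.filter (fun i : Fin (6 * n) =>
        (i : ℕ) ∈ Blk n (p.1.1 : ℕ) (p.1.2 : ℕ) ∧
        (i : ℕ) ∈ Blk n (p'.1.1 : ℕ) (p'.1.2 : ℕ))).card ≤ 1 := by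
      apply Finset.card_le_one.mpr
      intro i hi i' hi'
      simp only [Finset.mem_filter, Finset.mem_univ, true_and] at hi hi'
      by_contra hii
      have hvne : (i : ℕ) ≠ (i' : ℕ) := fun h => hii (Fin.ext h)
      obtain ⟨hja, haa⟩ := core n p.1.1 p.1.2 p'.1.1 p'.1.2 (i : ℕ) (i' : ℕ) hn
        p.1.1.isLt p'.1.1.isLt p.2 p'.2 p.1.2.isLt p'.1.2.isLt hvne
        hi.1 hi.2 hi'.1 hi'.2
      exact hne (Subtype.ext (Prod.ext (Fin.ext hja) (Fin.ext haa)))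
    exact_mod_cast hcard
end

section
/- Fix an integer n ≥ 2 and let H be the 6n × (4n²−2n) block–point incidence matrix of the construction. Define the Tanner graph of H as the simple bipartite graph whose vertex set is the disjoint union of the row index set V = {0,…,6n−1} and the column index set ({0,…,2n−1}\{n}) × {0,…,2n−1}, with an edge between row i and column (j,a) if and only if i ∈ B_{j,a}. Then this graph contains no cycle of length less than 6; that is, its girth is at least 6. -/
/-- The Tanner graph of the parity-check matrix H: a simple bipartite graph on the
disjoint union of the row indices V = {0,…,6n-1} and the column indices (j,a),
with an edge between row i and column (j,a) iff i ∈ B_{j,a}. -/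
def Tanner (n : ℕ) : SimpleGraph (Fin (6 * n) ⊕ ColIdx n) where
  Adj u v :=
    match u, v with
    | Sum.inl i, Sum.inr p => (i : ℕ) ∈ Blk n (p.1.1 : ℕ) (p.1.2 : ℕ)
    | Sum.inr p, Sum.inl i => (i : ℕ) ∈ Blk n (p.1.1 : ℕ) (p.1.2 : ℕ)
    | _, _ => False
  symm := by
    constructor
    intro u v h
    cases u <;> cases v <;> simp_all
  loopless := by
    constructor
    intro u h
    cases u <;> simp_all

/-
A cycle in the Tanner graph alternates between points and blocks, so its length is even, and a
4-cycle would be two distinct points lying in two distinct blocks. Every block meets each of the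
three layers `[0, 2n)`, `[2n, 4n)`, `[4n, 6n)` of `V` in exactly one point, with coordinates
`a`, `j + a`, `x(j) + a` modulo `2n`; two distinct common points therefore force two blocks to agree
in two of their coordinates. Each pair of coordinates determines `(j, a)`: the first two because
`j` and `a` are read off directly, the first and last because `x` is a permutation of `[0, 2n)`,
and the last two because `x(j) - j ≡ j + [j < n] (mod 2n)` is injective once `j = n` is excluded.
-/

namespace SimpleGraph

variable {V : Type*} {G : SimpleGraph V} {u : V} {w : G.Walk u u}

theorem Walk.IsCycle.length_ne_four
    (hG : ∀ x y, x ≠ y → (G.commonNeighbors x y).Subsingleton) (hw : w.IsCycle) :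
    w.length ≠ 4 := by
  intro h4
  have adj (i : ℕ) (hi : i < 4) : G.Adj (w.getVert i) (w.getVert (i + 1)) :=
    w.adj_getVert_succ (h4 ▸ hi)
  have h02 : w.getVert 0 ≠ w.getVert 2 :=
    hw.getVert_sub_one_ne_getVert_add_one (i := 1) (by omega)
  have h13 : w.getVert 1 ≠ w.getVert 3 :=
    hw.getVert_sub_one_ne_getVert_add_one (i := 2) (by omega)
  have h40 : w.getVert 4 = w.getVert 0 := by rw [← h4, Walk.getVert_length, Walk.getVert_zero]
  exact h13 <| hG _ _ h02
    (G.mem_commonNeighbors.2 ⟨adj 0 (by omega), (adj 1 (by omega)).symm⟩)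
    (G.mem_commonNeighbors.2 ⟨h40 ▸ (adj 3 (by omega)).symm, adj 2 (by omega)⟩)

theorem Walk.IsCycle.six_le_length (c : G.Coloring Bool)
    (hG : ∀ x y, x ≠ y → (G.commonNeighbors x y).Subsingleton) (hw : w.IsCycle) :
    6 ≤ w.length := by
  obtain ⟨k, hk⟩ : Even w.length := (c.even_length_iff_congr w).2 Iff.rfl
  have := hw.three_le_length
  have := hw.length_ne_four hG
  omega

end SimpleGraph

section Blocks

variable {n j j' a a' i i' : ℕ}

lemma xfun_lt (hj : j < 2 * n) : xfun n j < 2 * n := by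
  unfold xfun
  split_ifs <;> omega

lemma xfun_injective : Function.Injective (xfun n) := by
  intro j j' h
  unfold xfun at h
  split_ifs at h <;> omega

lemma natCast_xfun : (xfun n j : ZMod (2 * n)) = 2 * j + if j < n then 1 else 0 := by
  unfold xfun
  split_ifs with h
  · push_cast
    ring
  · have h2n : ((2 * n : ℕ) : ZMod (2 * n)) = 0 := ZMod.natCast_self _
    push_cast [Nat.cast_sub (not_lt.1 h)] at h2n ⊢
    linear_combination -h2n

lemma eq_of_add_mod_eq_of_xfun_add_mod_eq (hj : j < 2 * n) (hj' : j' < 2 * n)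
    (hjn : j ≠ n) (hj'n : j' ≠ n)
    (h₁ : (j + a) % (2 * n) = (j' + a') % (2 * n))
    (h₂ : (xfun n j + a) % (2 * n) = (xfun n j' + a') % (2 * n)) : j = j' := by
  rw [← ZMod.natCast_eq_natCast_iff'] at h₁ h₂
  push_cast [natCast_xfun] at h₁ h₂
  have hshift : ((j + if j < n then 1 else 0 : ℕ) : ZMod (2 * n)) =
      ((j' + if j' < n then 1 else 0 : ℕ) : ZMod (2 * n)) := by
    push_cast
    linear_combination h₂ - h₁
  have := ((ZMod.natCast_eq_natCast_iff _ _ _).1 hshift).eq_of_lt_of_lt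
    (by split_ifs <;> omega) (by split_ifs <;> omega)
  split_ifs at this <;> omega

lemma Blk_coords_agree_of_two_mem (hii : i ≠ i')
    (hi : i ∈ Blk n j a) (hi' : i' ∈ Blk n j a) (hk : i ∈ Blk n j' a') (hk' : i' ∈ Blk n j' a')
    (ha : a < 2 * n) (ha' : a' < 2 * n) :
    (a = a' ∧ (j + a) % (2 * n) = (j' + a') % (2 * n)) ∨
    (a = a' ∧ (xfun n j + a) % (2 * n) = (xfun n j' + a') % (2 * n)) ∨
    ((j + a) % (2 * n) = (j' + a') % (2 * n) ∧
      (xfun n j + a) % (2 * n) = (xfun n j' + a') % (2 * n)) := by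
  simp only [Blk, Finset.mem_insert, Finset.mem_singleton] at hi hi' hk hk'
  have := Nat.mod_lt (j + a) (show 0 < 2 * n by omega)
  have := Nat.mod_lt (j' + a') (show 0 < 2 * n by omega)
  have := Nat.mod_lt (xfun n j + a) (show 0 < 2 * n by omega)
  have := Nat.mod_lt (xfun n j' + a') (show 0 < 2 * n by omega)
  omega

lemma eq_of_two_mem_Blk (hj : j < 2 * n) (hj' : j' < 2 * n) (ha : a < 2 * n) (ha' : a' < 2 * n)
    (hjn : j ≠ n) (hj'n : j' ≠ n) (hii : i ≠ i')
    (hi : i ∈ Blk n j a) (hi' : i' ∈ Blk n j a) (hk : i ∈ Blk n j' a') (hk' : i' ∈ Blk n j' a') :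
    j = j' ∧ a = a' := by
  rcases Blk_coords_agree_of_two_mem hii hi hi' hk hk' ha ha' with
    ⟨rfl, h₁⟩ | ⟨rfl, h₂⟩ | ⟨h₁, h₂⟩
  · exact ⟨(Nat.ModEq.add_right_cancel' a h₁).eq_of_lt_of_lt hj hj', rfl⟩
  · exact ⟨xfun_injective <| (Nat.ModEq.add_right_cancel' a h₂).eq_of_lt_of_lt
      (xfun_lt hj) (xfun_lt hj'), rfl⟩
  · obtain rfl := eq_of_add_mod_eq_of_xfun_add_mod_eq hj hj' hjn hj'n h₁ h₂
    exact ⟨rfl, (Nat.ModEq.add_left_cancel' j h₁).eq_of_lt_of_lt ha ha'⟩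

end Blocks

namespace Tanner

variable {n : ℕ}

lemma colIdx_eq_of_two_mem {p q : ColIdx n} {i i' : ℕ} (hii : i ≠ i')
    (hi : i ∈ Blk n p.1.1 p.1.2) (hi' : i' ∈ Blk n p.1.1 p.1.2)
    (hk : i ∈ Blk n q.1.1 q.1.2) (hk' : i' ∈ Blk n q.1.1 q.1.2) : p = q := by
  obtain ⟨hj, ha⟩ := eq_of_two_mem_Blk p.1.1.isLt q.1.1.isLt p.1.2.isLt q.1.2.isLt p.2 q.2
    hii hi hi' hk hk'
  exact Subtype.ext (Prod.ext (Fin.ext hj) (Fin.ext ha))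

def coloring (n : ℕ) : (Tanner n).Coloring Bool :=
  SimpleGraph.Coloring.mk Sum.isLeft <| by
    rintro (i | p) (i' | p') h <;> simp_all [Tanner]

lemma commonNeighbors_subsingleton (u v : Fin (6 * n) ⊕ ColIdx n) (huv : u ≠ v) :
    ((Tanner n).commonNeighbors u v).Subsingleton := by
  intro b hb d hd
  rw [SimpleGraph.mem_commonNeighbors] at hb hd
  rcases u with i | p <;> rcases v with i' | p' <;> rcases b with b | q <;> rcases d with d | r <;>
    simp only [Tanner, false_and, and_false] at hb hd
  case inl.inl.inr.inr =>
    have hii : (i : ℕ) ≠ i' := Fin.val_injective.ne (Sum.inl_injective.ne_iff.1 huv)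
    rw [colIdx_eq_of_two_mem hii hb.1 hb.2 hd.1 hd.2]
  case inr.inr.inl.inl =>
    by_contra hbd
    have hbd' : (b : ℕ) ≠ d := Fin.val_injective.ne (Sum.inl_injective.ne_iff.1 hbd)
    exact huv (congrArg Sum.inr (colIdx_eq_of_two_mem hbd' hb.1 hd.1 hb.2 hd.2))

end Tanner

theorem stmt7_general (n : ℕ) :
    ∀ (v : Fin (6 * n) ⊕ ColIdx n) (w : (Tanner n).Walk v v),
      w.IsCycle → 6 ≤ w.length :=
  fun _ _ hw => hw.six_le_length (Tanner.coloring n) Tanner.commonNeighbors_subsingleton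

/-- The Tanner graph contains no cycle of length less than 6: its girth is at least 6. -/
theorem stmt7 (n : ℕ) (hn : 2 ≤ n) :
    ∀ (v : Fin (6 * n) ⊕ ColIdx n) (w : (Tanner n).Walk v v),
      w.IsCycle → 6 ≤ w.length :=
  stmt7_general n
end

section
/- Fix an integer n ≥ 2 and let H be the 6n × (4n²−2n) block–point incidence matrix of the construction, viewed over GF(2). Then the rank of H over GF(2) is at most 6n − 2. -/
def Hmat (n : ℕ) : Matrix (Fin (6 * n)) (ColIdx n) (ZMod 2) :=
  fun i p => if (i : ℕ) ∈ Blk n (p.1.1 : ℕ) (p.1.2 : ℕ) then 1 else 0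

open Finset Module

theorem Matrix.rank_add_finrank_le_of_col_mem_ker {K m n V : Type*} [Field K] [Fintype m]
    [Fintype n] [AddCommGroup V] [Module K V] (A : Matrix m n K) (f : (m → K) →ₗ[K] V)
    (hf : Function.Surjective f) (hA : ∀ j, f (A.col j) = 0) :
    A.rank + finrank K V ≤ Fintype.card m := by
  have hrange : LinearMap.range A.mulVecLin ≤ LinearMap.ker f := by
    rw [Matrix.range_mulVecLin, Submodule.span_le]
    rintro _ ⟨j, rfl⟩
    exact hA j
  have hrank := Submodule.finrank_mono hrange
  have hsum := LinearMap.finrank_range_add_finrank_ker f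
  rw [LinearMap.range_eq_top.mpr hf, finrank_top, finrank_fintype_fun_eq_card] at hsum
  rw [Matrix.rank]
  omega

def rowBand (n k : ℕ) : Finset (Fin (6 * n)) :=
  {i | 2 * n * k ≤ i ∧ i < 2 * n * (k + 1)}

lemma sum_rowBand_hmat {n k : ℕ} (p : ColIdx n) (hk : k < 3) :
    ∑ i ∈ rowBand n k, Hmat n i p = 1 := by
  obtain ⟨⟨⟨j, hj⟩, ⟨a, ha⟩⟩, -⟩ := p
  have hb := Nat.mod_lt (j + a) (show 0 < 2 * n by omega)
  have hc := Nat.mod_lt (xfun n j + a) (show 0 < 2 * n by omega)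
  suffices ∃ e, (rowBand n k).filter (fun i : Fin (6 * n) => (i : ℕ) ∈ Blk n j a) = {e} by
    obtain ⟨e, he⟩ := this
    simp only [Hmat]
    rw [sum_boole, he, card_singleton, Nat.cast_one]
  interval_cases k
  on_goal 1 => refine ⟨⟨a, by omega⟩, ?_⟩
  on_goal 2 => refine ⟨⟨(j + a) % (2 * n) + 2 * n, by omega⟩, ?_⟩
  on_goal 3 => refine ⟨⟨(xfun n j + a) % (2 * n) + 4 * n, by omega⟩, ?_⟩
  all_goals
    ext i
    simp only [rowBand, Blk, mem_filter, mem_univ, true_and, mem_insert, mem_singleton,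
      Fin.ext_iff]
    omega

def rowBandSum (n k : ℕ) : (Fin (6 * n) → ZMod 2) →ₗ[ZMod 2] ZMod 2 :=
  ∑ i ∈ rowBand n k, LinearMap.proj i

lemma rowBandSum_apply (n k : ℕ) (v : Fin (6 * n) → ZMod 2) :
    rowBandSum n k v = ∑ i ∈ rowBand n k, v i := by
  simp [rowBandSum]

def rowBandDiff (n : ℕ) : (Fin (6 * n) → ZMod 2) →ₗ[ZMod 2] ZMod 2 × ZMod 2 :=
  (rowBandSum n 1 - rowBandSum n 0).prod (rowBandSum n 2 - rowBandSum n 0)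

lemma rowBandDiff_hmat_col (n : ℕ) (p : ColIdx n) : rowBandDiff n ((Hmat n).col p) = 0 := by
  simp [rowBandDiff, rowBandSum_apply, Matrix.col_apply, sum_rowBand_hmat]

lemma rowBandDiff_surjective {n : ℕ} (hn : 1 ≤ n) : Function.Surjective (rowBandDiff n) := by
  rintro ⟨x, y⟩
  refine ⟨Pi.single ⟨2 * n, by omega⟩ x + Pi.single ⟨4 * n, by omega⟩ y, ?_⟩
  simp only [rowBandDiff, LinearMap.prod_apply, Function.prod_apply, LinearMap.sub_apply,
    rowBandSum_apply, rowBand, Pi.add_apply, sum_add_distrib, sum_pi_single', mem_filter,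
    mem_univ, true_and, Prod.mk.injEq]
  split_ifs <;> first | omega | simp

/-- The rank of H over GF(2) is at most 6n - 2. -/
theorem stmt9 (n : ℕ) (hn : 2 ≤ n) :
    (Hmat n).rank ≤ 6 * n - 2 := by
  have := (Hmat n).rank_add_finrank_le_of_col_mem_ker (rowBandDiff n)
    (rowBandDiff_surjective (by omega)) (rowBandDiff_hmat_col n)
  simp only [finrank_prod, finrank_self, Fintype.card_fin] at this
  omega
end

section
/- Fix an integer n ≥ 6 and let H be the 6n × (4n²−2n) block–point incidence matrix of the construction, viewed over GF(2). Let 𝓘 = C₁ ∪ C₂ ∪ C₃ ∪ C₄ be the following set of 6n−2 blocks: C₁ = { {a, 2n+a, 4n+((1+a) mod 2n)} : a = 0,…,2n−1 }; C₂ = { {b, 2n+1+b, 4n+((3+b) mod 2n)} : b = 0,…,2n−2 }; C₃ = { {c, 2n+2+c, 4n+((5+c) mod 2n)} : c = 0,…,2n−4 }; C₄ = { {0, 3n+1, 4n+2}, {1, 3n+2, 4n+3} }. Then the 6n−2 columns of H corresponding to the blocks of 𝓘 are linearly independent over GF(2), and consequently the rank of H over GF(2) is exactly 6n−2. -/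
/-- C₁ = { {a, 2n+a, 4n+((1+a) mod 2n)} : a = 0,…,2n-1 }. -/
def Cone (n : ℕ) : Finset (Finset ℕ) :=
  (Finset.range (2 * n)).image
    (fun a => ({a, 2 * n + a, 4 * n + (1 + a) % (2 * n)} : Finset ℕ))

/-- C₂ = { {b, 2n+1+b, 4n+((3+b) mod 2n)} : b = 0,…,2n-2 }. -/
def Ctwo (n : ℕ) : Finset (Finset ℕ) :=
  (Finset.range (2 * n - 1)).image
    (fun b => ({b, 2 * n + 1 + b, 4 * n + (3 + b) % (2 * n)} : Finset ℕ))

/-- C₃ = { {c, 2n+2+c, 4n+((5+c) mod 2n)} : c = 0,…,2n-4 }. -/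
def Cthree (n : ℕ) : Finset (Finset ℕ) :=
  (Finset.range (2 * n - 3)).image
    (fun c => ({c, 2 * n + 2 + c, 4 * n + (5 + c) % (2 * n)} : Finset ℕ))

/-- C₄ = { {0, 3n+1, 4n+2}, {1, 3n+2, 4n+3} }. -/
def Cfour (n : ℕ) : Finset (Finset ℕ) :=
  {({0, 3 * n + 1, 4 * n + 2} : Finset ℕ), ({1, 3 * n + 2, 4 * n + 3} : Finset ℕ)}

/-- 𝓘 = C₁ ∪ C₂ ∪ C₃ ∪ C₄. -/
def Iset (n : ℕ) : Finset (Finset ℕ) := Cone n ∪ Ctwo n ∪ Cthree n ∪ Cfour n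

/-- The column of H corresponding to a block B is its indicator vector over GF(2). -/
def colVec (n : ℕ) (B : Finset ℕ) : Fin (6 * n) → ZMod 2 :=
  fun i => if (i : ℕ) ∈ B then 1 else 0

namespace S10
open Matrix

def blk1 (n a : ℕ) : Finset ℕ := {a, 2*n+a, 4*n+(1+a)%(2*n)}
def blk2 (n b : ℕ) : Finset ℕ := {b, 2*n+1+b, 4*n+(3+b)%(2*n)}
def blk3 (n c : ℕ) : Finset ℕ := {c, 2*n+2+c, 4*n+(5+c)%(2*n)}
def c4a (n : ℕ) : Finset ℕ := {0, 3*n+1, 4*n+2}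
def c4b (n : ℕ) : Finset ℕ := {1, 3*n+2, 4*n+3}

lemma mem_blk1 {n a i : ℕ} : i ∈ blk1 n a ↔ i = a ∨ i = 2*n+a ∨ i = 4*n+(1+a)%(2*n) := by
  simp [blk1]
lemma mem_blk2 {n b i : ℕ} : i ∈ blk2 n b ↔ i = b ∨ i = 2*n+1+b ∨ i = 4*n+(3+b)%(2*n) := by
  simp [blk2]
lemma mem_blk3 {n c i : ℕ} : i ∈ blk3 n c ↔ i = c ∨ i = 2*n+2+c ∨ i = 4*n+(5+c)%(2*n) := by
  simp [blk3]
lemma mem_c4a {n i : ℕ} : i ∈ c4a n ↔ i = 0 ∨ i = 3*n+1 ∨ i = 4*n+2 := by simp [c4a]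
lemma mem_c4b {n i : ℕ} : i ∈ c4b n ↔ i = 1 ∨ i = 3*n+2 ∨ i = 4*n+3 := by simp [c4b]

lemma cone_eq (n : ℕ) : Cone n = (Finset.range (2*n)).image (blk1 n) := rfl
lemma ctwo_eq (n : ℕ) : Ctwo n = (Finset.range (2*n-1)).image (blk2 n) := rfl
lemma cthree_eq (n : ℕ) : Cthree n = (Finset.range (2*n-3)).image (blk3 n) := rfl
lemma cfour_eq (n : ℕ) : Cfour n = {c4a n, c4b n} := rfl

lemma sum_pick (m a₀ : ℕ) (f : ℕ → ZMod 2) (P : ℕ → Prop) [DecidablePred P]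
    (h₀ : a₀ < m) (hiff : ∀ a, a < m → (P a ↔ a = a₀)) :
    ∑ a ∈ Finset.range m, f a * (if P a then 1 else 0) = f a₀ := by
  calc ∑ a ∈ Finset.range m, f a * (if P a then 1 else 0)
      = ∑ a ∈ Finset.range m, (if a = a₀ then f a else 0) := by
        refine Finset.sum_congr rfl (fun a ha => ?_)
        rw [mul_ite, mul_one, mul_zero]
        exact if_congr (hiff a (Finset.mem_range.mp ha)) rfl rfl
    _ = f a₀ := by
        rw [Finset.sum_ite_eq' (Finset.range m) a₀ f]
        exact if_pos (Finset.mem_range.mpr h₀)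

lemma sum_none (m : ℕ) (f : ℕ → ZMod 2) (P : ℕ → Prop) [DecidablePred P]
    (hiff : ∀ a, a < m → ¬ P a) :
    ∑ a ∈ Finset.range m, f a * (if P a then 1 else 0) = 0 :=
  Finset.sum_eq_zero fun a ha => by
    rw [if_neg (hiff a (Finset.mem_range.mp ha)), mul_zero]

lemma modcase {n x : ℕ} (hn : 0 < n) (hx : x < 4*n) :
    (x < 2*n ∧ x % (2*n) = x) ∨ (2*n ≤ x ∧ x % (2*n) = x - 2*n) := by
  rcases Nat.lt_or_ge x (2*n) with h | h
  · exact Or.inl ⟨h, Nat.mod_eq_of_lt h⟩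
  · right
    refine ⟨h, ?_⟩
    rw [Nat.mod_eq_sub_mod h, Nat.mod_eq_of_lt (by omega)]



def FA (n : ℕ) (d0 d1 : ZMod 2) (k : ℕ) : ZMod 2 :=
  if k = 0 then 0 else if k = 1 then d0 else if k ≤ n+1 then d0+d1
  else if (k-n) % 2 = 0 then d1 else d0

def FB (n : ℕ) (d0 d1 : ZMod 2) (k : ℕ) : ZMod 2 :=
  if k = 0 then d0 else if k ≤ n-1 then d0+d1 else if k = n then d1
  else if k = n+1 then d0 else d0+d1

def FG (n : ℕ) (d0 d1 : ZMod 2) (k : ℕ) : ZMod 2 :=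
  if k ≤ n-1 then 0 else if (k-n) % 2 = 0 then d0 else d1

section FAeval
variable {n : ℕ} {d0 d1 : ZMod 2}

lemma FA_0 : FA n d0 d1 0 = 0 := by rw [FA, if_pos rfl]
lemma FA_1 (hn : 1 ≤ n) : FA n d0 d1 1 = d0 := by
  rw [FA, if_neg (by omega), if_pos rfl]
lemma FA_mid {k : ℕ} (h1 : 2 ≤ k) (h2 : k ≤ n+1) : FA n d0 d1 k = d0+d1 := by
  rw [FA, if_neg (by omega), if_neg (by omega), if_pos (by omega)]
lemma FA_hi {k : ℕ} (h1 : n+2 ≤ k) :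
    FA n d0 d1 k = if (k-n) % 2 = 0 then d1 else d0 := by
  rw [FA, if_neg (by omega), if_neg (by omega), if_neg (by omega)]
lemma FB_0 : FB n d0 d1 0 = d0 := by rw [FB, if_pos rfl]
lemma FB_mid {k : ℕ} (h1 : 1 ≤ k) (h2 : k ≤ n-1) : FB n d0 d1 k = d0+d1 := by
  rw [FB, if_neg (by omega), if_pos (by omega)]
lemma FB_n (hn : 2 ≤ n) : FB n d0 d1 n = d1 := by
  rw [FB, if_neg (by omega), if_neg (by omega), if_pos rfl]
lemma FB_n1 (hn : 2 ≤ n) : FB n d0 d1 (n+1) = d0 := by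
  rw [FB, if_neg (by omega), if_neg (by omega), if_neg (by omega), if_pos rfl]
lemma FB_hi {k : ℕ} (h1 : n+2 ≤ k) : FB n d0 d1 k = d0+d1 := by
  rw [FB, if_neg (by omega), if_neg (by omega), if_neg (by omega), if_neg (by omega)]
lemma FG_lo {k : ℕ} (h : k ≤ n-1) : FG n d0 d1 k = 0 := by
  rw [FG, if_pos h]
lemma FG_hi {k : ℕ} (h : n ≤ k) (hn : 1 ≤ n) :
    FG n d0 d1 k = if (k-n) % 2 = 0 then d0 else d1 := by
  rw [FG, if_neg (by omega)]

lemma FA_zero {k : ℕ} : FA n 0 0 k = 0 := by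
  rw [FA]; split_ifs <;> simp
lemma FB_zero {k : ℕ} : FB n 0 0 k = 0 := by
  rw [FB]; split_ifs <;> simp
lemma FG_zero {k : ℕ} : FG n 0 0 k = 0 := by
  rw [FG]; split_ifs <;> simp

lemma L1 {k : ℕ} (hn : 6 ≤ n) (h3 : 3 ≤ k) (h2 : k ≤ 2*n-2) :
    FB n d0 d1 (k-1) + FG n d0 d1 (k-3) = FA n d0 d1 (k+1) := by
  by_cases hk1 : k ≤ n
  · rw [FB_mid (by omega) (by omega), FG_lo (by omega), FA_mid (by omega) (by omega), add_zero]
  by_cases hk2 : k = n+1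
  · rw [show k-1 = n by omega, show k-3 = n-2 by omega, show k+1 = n+2 by omega,
      FB_n (by omega), FG_lo (by omega), FA_hi (by omega), if_pos (by omega), add_zero]
  by_cases hk3 : k = n+2
  · rw [show k-1 = n+1 by omega, show k-3 = n-1 by omega, show k+1 = n+3 by omega,
      FB_n1 (by omega), FG_lo (by omega), FA_hi (by omega), if_neg (by omega), add_zero]
  · -- n+3 ≤ k
    rw [FB_hi (by omega), FG_hi (by omega) (by omega), FA_hi (by omega)]
    have hp : (k-3-n) % 2 = (k+1-n) % 2 := by omega
    rw [hp]
    by_cases hq : (k+1-n) % 2 = 0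
    · rw [if_pos hq, if_pos hq]
      exact (by decide : ∀ x y : ZMod 2, (x+y)+x = y) d0 d1
    · rw [if_neg hq, if_neg hq]
      exact (by decide : ∀ x y : ZMod 2, (x+y)+y = x) d0 d1

lemma L2 {k : ℕ} (hn : 6 ≤ n) (h3 : 2 ≤ k) (h2 : k ≤ 2*n-3) :
    FA n d0 d1 (k+1) + FG n d0 d1 (k-1) + (if k+1 = n+1 then d0 else 0) +
      (if k+1 = n+2 then d1 else 0) = FB n d0 d1 k := by
  by_cases hk1 : k ≤ n-1
  · rw [FA_mid (by omega) (by omega), FG_lo (by omega),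
      if_neg (show ¬(k+1 = n+1) by omega), if_neg (show ¬(k+1 = n+2) by omega),
      FB_mid (by omega) (by omega), add_zero, add_zero, add_zero]
  by_cases hk2 : k = n
  · rw [hk2]
    rw [FA_mid (by omega) (by omega), FG_lo (by omega), if_pos (show n+1 = n+1 from rfl),
      if_neg (show ¬(n+1 = n+2) by omega), FB_n (by omega), add_zero, add_zero]
    exact (by decide : ∀ x y : ZMod 2, (x+y)+x = y) d0 d1
  by_cases hk3 : k = n+1
  · rw [hk3]
    rw [show n+1-1 = n by omega, FA_hi (by omega),
      if_pos (show (n+1+1-n) % 2 = 0 by omega), FG_hi (by omega) (by omega),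
      if_pos (show (n-n) % 2 = 0 by omega), if_neg (show ¬(n+1+1 = n+1) by omega),
      if_pos (show n+1+1 = n+2 by omega), FB_n1 (by omega), add_zero]
    exact (by decide : ∀ x y : ZMod 2, y+x+y = x) d0 d1
  · -- n+2 ≤ k
    rw [FA_hi (by omega), FG_hi (by omega) (by omega),
      if_neg (show ¬(k+1 = n+1) by omega), if_neg (show ¬(k+1 = n+2) by omega),
      FB_hi (by omega), add_zero, add_zero]
    by_cases hq : (k+1-n) % 2 = 0
    · rw [if_pos hq, if_pos (show (k-1-n) % 2 = 0 by omega)]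
      exact (by decide : ∀ x y : ZMod 2, y+x = x+y) d0 d1
    · rw [if_neg hq, if_neg (show ¬((k-1-n) % 2 = 0) by omega)]

lemma L3 {k : ℕ} (hn : 6 ≤ n) (h3 : 2 ≤ k) (h2 : k ≤ 2*n-4) :
    FA n d0 d1 k + FB n d0 d1 k = FG n d0 d1 k := by
  by_cases hk1 : k ≤ n-1
  · rw [FA_mid (by omega) (by omega), FB_mid (by omega) (by omega), FG_lo (by omega)]
    exact (by decide : ∀ x y : ZMod 2, (x+y)+(x+y) = 0) d0 d1
  by_cases hk2 : k = n
  · rw [hk2]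
    rw [FA_mid (by omega) (by omega), FB_n (by omega), FG_hi (by omega) (by omega),
      if_pos (show (n-n) % 2 = 0 by omega)]
    exact (by decide : ∀ x y : ZMod 2, (x+y)+y = x) d0 d1
  by_cases hk3 : k = n+1
  · rw [hk3]
    rw [FA_mid (by omega) (by omega), FB_n1 (by omega), FG_hi (by omega) (by omega),
      if_neg (show ¬((n+1-n) % 2 = 0) by omega)]
    exact (by decide : ∀ x y : ZMod 2, (x+y)+x = y) d0 d1
  · -- n+2 ≤ k
    rw [FA_hi (by omega), FB_hi (by omega), FG_hi (by omega) (by omega)]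
    by_cases hq : (k-n) % 2 = 0
    · rw [if_pos hq, if_pos hq]
      exact (by decide : ∀ x y : ZMod 2, y+(x+y) = x) d0 d1
    · rw [if_neg hq, if_neg hq]
      exact (by decide : ∀ x y : ZMod 2, x+(x+y) = y) d0 d1

end FAeval


variable {n : ℕ} (hn : 6 ≤ n)

include hn

lemma blk1_inj {a a' : ℕ} (ha : a < 2*n) (h : blk1 n a = blk1 n a') : a = a' := by
  have h1 : a ∈ blk1 n a' := h ▸ (by rw [mem_blk1]; tauto)
  rw [mem_blk1] at h1
  generalize (1+a') % (2*n) = r at h1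
  omega

lemma blk2_inj {b b' : ℕ} (hb : b < 2*n-1) (h : blk2 n b = blk2 n b') : b = b' := by
  have h1 : b ∈ blk2 n b' := h ▸ (by rw [mem_blk2]; tauto)
  rw [mem_blk2] at h1
  generalize (3+b') % (2*n) = r at h1
  omega

lemma blk3_inj {c c' : ℕ} (hc : c < 2*n-3) (h : blk3 n c = blk3 n c') : c = c' := by
  have h1 : c ∈ blk3 n c' := h ▸ (by rw [mem_blk3]; tauto)
  rw [mem_blk3] at h1
  generalize (5+c') % (2*n) = r at h1
  omega

lemma blk1_ne_blk2 {a b : ℕ} (ha : a < 2*n) (hb : b < 2*n-1) : blk1 n a ≠ blk2 n b := by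
  intro h
  have h1 : b ∈ blk1 n a := h ▸ (by rw [mem_blk2]; tauto)
  rw [mem_blk1] at h1
  have hba : b = a := by generalize (1+a) % (2*n) = r at h1; omega
  subst hba
  have h2 : 2*n+1+b ∈ blk1 n b := h ▸ (by rw [mem_blk2]; tauto)
  rw [mem_blk1] at h2
  generalize (1+b) % (2*n) = r at h2
  omega

lemma blk1_ne_blk3 {a c : ℕ} (ha : a < 2*n) (hc : c < 2*n-3) : blk1 n a ≠ blk3 n c := by
  intro h
  have h1 : c ∈ blk1 n a := h ▸ (by rw [mem_blk3]; tauto)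
  rw [mem_blk1] at h1
  have hca : c = a := by generalize (1+a) % (2*n) = r at h1; omega
  subst hca
  have h2 : 2*n+2+c ∈ blk1 n c := h ▸ (by rw [mem_blk3]; tauto)
  rw [mem_blk1] at h2
  generalize (1+c) % (2*n) = r at h2
  omega

lemma blk2_ne_blk3 {b c : ℕ} (hb : b < 2*n-1) (hc : c < 2*n-3) : blk2 n b ≠ blk3 n c := by
  intro h
  have h1 : c ∈ blk2 n b := h ▸ (by rw [mem_blk3]; tauto)
  rw [mem_blk2] at h1
  have hcb : c = b := by generalize (3+b) % (2*n) = r at h1; omega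
  subst hcb
  have h2 : 2*n+2+c ∈ blk2 n c := h ▸ (by rw [mem_blk3]; tauto)
  rw [mem_blk2] at h2
  generalize (3+c) % (2*n) = r at h2
  omega

lemma blk1_ne_c4a {a : ℕ} (ha : a < 2*n) : blk1 n a ≠ c4a n := by
  intro h
  have h1 : 3*n+1 ∈ blk1 n a := h ▸ (by rw [mem_c4a]; tauto)
  rw [mem_blk1] at h1
  have haa : a = n+1 := by generalize hr : (1+a) % (2*n) = r at h1
                           have : r < 2*n := hr ▸ Nat.mod_lt _ (by omega)
                           omega
  subst haa
  have h2 : (0:ℕ) ∈ blk1 n (n+1) := h ▸ (by rw [mem_c4a]; tauto)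
  rw [mem_blk1] at h2
  generalize (1+(n+1)) % (2*n) = r at h2
  omega

lemma blk1_ne_c4b {a : ℕ} (ha : a < 2*n) : blk1 n a ≠ c4b n := by
  intro h
  have h1 : 3*n+2 ∈ blk1 n a := h ▸ (by rw [mem_c4b]; tauto)
  rw [mem_blk1] at h1
  have haa : a = n+2 := by generalize hr : (1+a) % (2*n) = r at h1
                           have : r < 2*n := hr ▸ Nat.mod_lt _ (by omega)
                           omega
  subst haa
  have h2 : (1:ℕ) ∈ blk1 n (n+2) := h ▸ (by rw [mem_c4b]; tauto)
  rw [mem_blk1] at h2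
  generalize (1+(n+2)) % (2*n) = r at h2
  omega

lemma blk2_ne_c4a {b : ℕ} (hb : b < 2*n-1) : blk2 n b ≠ c4a n := by
  intro h
  have h1 : (0:ℕ) ∈ blk2 n b := h ▸ (by rw [mem_c4a]; tauto)
  rw [mem_blk2] at h1
  have hb0 : b = 0 := by generalize (3+b) % (2*n) = r at h1; omega
  subst hb0
  have h2 : 3*n+1 ∈ blk2 n 0 := h ▸ (by rw [mem_c4a]; tauto)
  rw [mem_blk2] at h2
  generalize (3+0) % (2*n) = r at h2
  omega

lemma blk2_ne_c4b {b : ℕ} (hb : b < 2*n-1) : blk2 n b ≠ c4b n := by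
  intro h
  have h1 : (1:ℕ) ∈ blk2 n b := h ▸ (by rw [mem_c4b]; tauto)
  rw [mem_blk2] at h1
  have hb1 : b = 1 := by generalize (3+b) % (2*n) = r at h1; omega
  subst hb1
  have h2 : 3*n+2 ∈ blk2 n 1 := h ▸ (by rw [mem_c4b]; tauto)
  rw [mem_blk2] at h2
  generalize (3+1) % (2*n) = r at h2
  omega

lemma blk3_ne_c4a {c : ℕ} (hc : c < 2*n-3) : blk3 n c ≠ c4a n := by
  intro h
  have h1 : (0:ℕ) ∈ blk3 n c := h ▸ (by rw [mem_c4a]; tauto)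
  rw [mem_blk3] at h1
  have hc0 : c = 0 := by generalize (5+c) % (2*n) = r at h1; omega
  subst hc0
  have h2 : 3*n+1 ∈ blk3 n 0 := h ▸ (by rw [mem_c4a]; tauto)
  rw [mem_blk3] at h2
  generalize (5+0) % (2*n) = r at h2
  omega

lemma blk3_ne_c4b {c : ℕ} (hc : c < 2*n-3) : blk3 n c ≠ c4b n := by
  intro h
  have h1 : (1:ℕ) ∈ blk3 n c := h ▸ (by rw [mem_c4b]; tauto)
  rw [mem_blk3] at h1
  have hc1 : c = 1 := by generalize (5+c) % (2*n) = r at h1; omega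
  subst hc1
  have h2 : 3*n+2 ∈ blk3 n 1 := h ▸ (by rw [mem_c4b]; tauto)
  rw [mem_blk3] at h2
  generalize (5+1) % (2*n) = r at h2
  omega

lemma c4a_ne_c4b : c4a n ≠ c4b n := by
  intro h
  have h1 : (0:ℕ) ∈ c4b n := h ▸ (by rw [mem_c4a]; tauto)
  rw [mem_c4b] at h1
  omega

lemma disj12 : Disjoint (Cone n) (Ctwo n) := by
  rw [Finset.disjoint_left]
  rintro S hS hS'
  rw [cone_eq, Finset.mem_image] at hS
  rw [ctwo_eq, Finset.mem_image] at hS'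
  obtain ⟨a, ha, rfl⟩ := hS
  obtain ⟨b, hb, hEq⟩ := hS'
  exact blk1_ne_blk2 hn (Finset.mem_range.mp ha) (Finset.mem_range.mp hb) hEq.symm

lemma disj13 : Disjoint (Cone n) (Cthree n) := by
  rw [Finset.disjoint_left]
  rintro S hS hS'
  rw [cone_eq, Finset.mem_image] at hS
  rw [cthree_eq, Finset.mem_image] at hS'
  obtain ⟨a, ha, rfl⟩ := hS
  obtain ⟨c, hc, hEq⟩ := hS'
  exact blk1_ne_blk3 hn (Finset.mem_range.mp ha) (Finset.mem_range.mp hc) hEq.symm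

lemma disj23 : Disjoint (Ctwo n) (Cthree n) := by
  rw [Finset.disjoint_left]
  rintro S hS hS'
  rw [ctwo_eq, Finset.mem_image] at hS
  rw [cthree_eq, Finset.mem_image] at hS'
  obtain ⟨b, hb, rfl⟩ := hS
  obtain ⟨c, hc, hEq⟩ := hS'
  exact blk2_ne_blk3 hn (Finset.mem_range.mp hb) (Finset.mem_range.mp hc) hEq.symm

lemma disj14 : Disjoint (Cone n) (Cfour n) := by
  rw [Finset.disjoint_left]
  rintro S hS hS'
  rw [cone_eq, Finset.mem_image] at hS
  rw [cfour_eq, Finset.mem_insert, Finset.mem_singleton] at hS'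
  obtain ⟨a, ha, rfl⟩ := hS
  rcases hS' with h | h
  · exact blk1_ne_c4a hn (Finset.mem_range.mp ha) h
  · exact blk1_ne_c4b hn (Finset.mem_range.mp ha) h

lemma disj24 : Disjoint (Ctwo n) (Cfour n) := by
  rw [Finset.disjoint_left]
  rintro S hS hS'
  rw [ctwo_eq, Finset.mem_image] at hS
  rw [cfour_eq, Finset.mem_insert, Finset.mem_singleton] at hS'
  obtain ⟨b, hb, rfl⟩ := hS
  rcases hS' with h | h
  · exact blk2_ne_c4a hn (Finset.mem_range.mp hb) h
  · exact blk2_ne_c4b hn (Finset.mem_range.mp hb) h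

lemma disj34 : Disjoint (Cthree n) (Cfour n) := by
  rw [Finset.disjoint_left]
  rintro S hS hS'
  rw [cthree_eq, Finset.mem_image] at hS
  rw [cfour_eq, Finset.mem_insert, Finset.mem_singleton] at hS'
  obtain ⟨c, hc, rfl⟩ := hS
  rcases hS' with h | h
  · exact blk3_ne_c4a hn (Finset.mem_range.mp hc) h
  · exact blk3_ne_c4b hn (Finset.mem_range.mp hc) h

lemma card_Iset : (Iset n).card = 6*n - 2 := by
  have h1 : (Cone n).card = 2*n := by
    rw [cone_eq, Finset.card_image_of_injOn, Finset.card_range]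
    intro a ha a' _ h
    exact blk1_inj hn (Finset.mem_coe.mp ha |> Finset.mem_range.mp) h
  have h2 : (Ctwo n).card = 2*n - 1 := by
    rw [ctwo_eq, Finset.card_image_of_injOn, Finset.card_range]
    intro b hb b' _ h
    exact blk2_inj hn (Finset.mem_coe.mp hb |> Finset.mem_range.mp) h
  have h3 : (Cthree n).card = 2*n - 3 := by
    rw [cthree_eq, Finset.card_image_of_injOn, Finset.card_range]
    intro c hc c' _ h
    exact blk3_inj hn (Finset.mem_coe.mp hc |> Finset.mem_range.mp) h
  have h4 : (Cfour n).card = 2 := by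
    rw [cfour_eq, Finset.card_insert_of_notMem (by simpa using c4a_ne_c4b hn),
      Finset.card_singleton]
  rw [Iset, Finset.card_union_of_disjoint, Finset.card_union_of_disjoint,
    Finset.card_union_of_disjoint (disj12 hn), h1, h2, h3, h4]
  · omega
  · exact Finset.disjoint_union_left.mpr ⟨disj13 hn, disj23 hn⟩
  · exact Finset.disjoint_union_left.mpr
      ⟨Finset.disjoint_union_left.mpr ⟨disj14 hn, disj24 hn⟩, disj34 hn⟩


section Eqs
variable (F : Finset ℕ → ZMod 2)
variable (master : ∀ i : ℕ, i < 6*n →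
  (∑ a ∈ Finset.range (2*n), F (blk1 n a) * (if i ∈ blk1 n a then 1 else 0)) +
  (∑ b ∈ Finset.range (2*n-1), F (blk2 n b) * (if i ∈ blk2 n b then 1 else 0)) +
  (∑ c ∈ Finset.range (2*n-3), F (blk3 n c) * (if i ∈ blk3 n c then 1 else 0)) +
  F (c4a n) * (if i ∈ c4a n then 1 else 0) +
  F (c4b n) * (if i ∈ c4b n then 1 else 0) = 0)
include master

lemma eq2_gen {t : ℕ} (h1 : 3 ≤ t) (h2 : t ≤ 2*n-2) :
    F (blk1 n t) + F (blk2 n (t-1)) + F (blk3 n (t-2)) +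
      (if t = n+1 then F (c4a n) else 0) + (if t = n+2 then F (c4b n) else 0) = 0 := by
  have h := master (2*n+t) (by omega)
  have e1 : (∑ a ∈ Finset.range (2*n), F (blk1 n a) * (if 2*n+t ∈ blk1 n a then 1 else 0))
      = F (blk1 n t) := by
    refine sum_pick _ _ _ _ (by omega) (fun a ha => ?_)
    rw [mem_blk1]; generalize (1+a) % (2*n) = r; omega
  have e2 : (∑ b ∈ Finset.range (2*n-1), F (blk2 n b) * (if 2*n+t ∈ blk2 n b then 1 else 0))
      = F (blk2 n (t-1)) := by
    refine sum_pick _ _ _ _ (by omega) (fun b hb => ?_)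
    rw [mem_blk2]; generalize (3+b) % (2*n) = r; omega
  have e3 : (∑ c ∈ Finset.range (2*n-3), F (blk3 n c) * (if 2*n+t ∈ blk3 n c then 1 else 0))
      = F (blk3 n (t-2)) := by
    refine sum_pick _ _ _ _ (by omega) (fun c hc => ?_)
    rw [mem_blk3]; generalize (5+c) % (2*n) = r; omega
  have e4 : (if 2*n+t ∈ c4a n then (1:ZMod 2) else 0) = (if t = n+1 then 1 else 0) :=
    if_congr (by rw [mem_c4a]; omega) rfl rfl
  have e5 : (if 2*n+t ∈ c4b n then (1:ZMod 2) else 0) = (if t = n+2 then 1 else 0) :=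
    if_congr (by rw [mem_c4b]; omega) rfl rfl
  rw [e1, e2, e3, e4, e5, mul_ite, mul_one, mul_zero, mul_ite, mul_one, mul_zero] at h
  exact h

lemma eq2_top :
    F (blk1 n (2*n-1)) + F (blk2 n (2*n-2)) = 0 := by
  have h := master (2*n+(2*n-1)) (by omega)
  have e1 : (∑ a ∈ Finset.range (2*n), F (blk1 n a) * (if 2*n+(2*n-1) ∈ blk1 n a then 1 else 0))
      = F (blk1 n (2*n-1)) := by
    refine sum_pick _ _ _ _ (by omega) (fun a ha => ?_)
    rw [mem_blk1]; generalize (1+a) % (2*n) = r; omega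
  have e2 : (∑ b ∈ Finset.range (2*n-1), F (blk2 n b) * (if 2*n+(2*n-1) ∈ blk2 n b then 1 else 0))
      = F (blk2 n (2*n-2)) := by
    refine sum_pick _ _ _ _ (by omega) (fun b hb => ?_)
    rw [mem_blk2]; generalize (3+b) % (2*n) = r; omega
  have e3 : (∑ c ∈ Finset.range (2*n-3), F (blk3 n c) * (if 2*n+(2*n-1) ∈ blk3 n c then 1 else 0))
      = 0 := by
    refine sum_none _ _ _ (fun c hc => ?_)
    rw [mem_blk3]; generalize (5+c) % (2*n) = r; omega
  rw [e1, e2, e3, if_neg (by rw [mem_c4a]; omega), if_neg (by rw [mem_c4b]; omega),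
    mul_zero, mul_zero, add_zero, add_zero, add_zero] at h
  exact h

lemma eq1_0 :
    F (blk1 n 0) + F (blk2 n 0) + F (blk3 n 0) + F (c4a n) = 0 := by
  have h := master 0 (by omega)
  have e1 : (∑ a ∈ Finset.range (2*n), F (blk1 n a) * (if 0 ∈ blk1 n a then 1 else 0))
      = F (blk1 n 0) := by
    refine sum_pick _ _ _ _ (by omega) (fun a ha => ?_)
    rw [mem_blk1]; generalize (1+a) % (2*n) = r; omega
  have e2 : (∑ b ∈ Finset.range (2*n-1), F (blk2 n b) * (if 0 ∈ blk2 n b then 1 else 0))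
      = F (blk2 n 0) := by
    refine sum_pick _ _ _ _ (by omega) (fun b hb => ?_)
    rw [mem_blk2]; generalize (3+b) % (2*n) = r; omega
  have e3 : (∑ c ∈ Finset.range (2*n-3), F (blk3 n c) * (if 0 ∈ blk3 n c then 1 else 0))
      = F (blk3 n 0) := by
    refine sum_pick _ _ _ _ (by omega) (fun c hc => ?_)
    rw [mem_blk3]; generalize (5+c) % (2*n) = r; omega
  rw [e1, e2, e3, if_pos (by rw [mem_c4a]; omega), if_neg (by rw [mem_c4b]; omega),
    mul_one, mul_zero, add_zero] at h
  exact h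

lemma eq1_1 :
    F (blk1 n 1) + F (blk2 n 1) + F (blk3 n 1) + F (c4b n) = 0 := by
  have h := master 1 (by omega)
  have e1 : (∑ a ∈ Finset.range (2*n), F (blk1 n a) * (if 1 ∈ blk1 n a then 1 else 0))
      = F (blk1 n 1) := by
    refine sum_pick _ _ _ _ (by omega) (fun a ha => ?_)
    rw [mem_blk1]; generalize (1+a) % (2*n) = r; omega
  have e2 : (∑ b ∈ Finset.range (2*n-1), F (blk2 n b) * (if 1 ∈ blk2 n b then 1 else 0))
      = F (blk2 n 1) := by
    refine sum_pick _ _ _ _ (by omega) (fun b hb => ?_)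
    rw [mem_blk2]; generalize (3+b) % (2*n) = r; omega
  have e3 : (∑ c ∈ Finset.range (2*n-3), F (blk3 n c) * (if 1 ∈ blk3 n c then 1 else 0))
      = F (blk3 n 1) := by
    refine sum_pick _ _ _ _ (by omega) (fun c hc => ?_)
    rw [mem_blk3]; generalize (5+c) % (2*n) = r; omega
  rw [e1, e2, e3, if_neg (by rw [mem_c4a]; omega), if_pos (by rw [mem_c4b]; omega),
    mul_one, mul_zero, add_zero] at h
  exact h

lemma eq1_gen {a : ℕ} (h1 : 2 ≤ a) (h2 : a ≤ 2*n-4) :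
    F (blk1 n a) + F (blk2 n a) + F (blk3 n a) = 0 := by
  have h := master a (by omega)
  have e1 : (∑ x ∈ Finset.range (2*n), F (blk1 n x) * (if a ∈ blk1 n x then 1 else 0))
      = F (blk1 n a) := by
    refine sum_pick _ _ _ _ (by omega) (fun x hx => ?_)
    rw [mem_blk1]; generalize (1+x) % (2*n) = r; omega
  have e2 : (∑ b ∈ Finset.range (2*n-1), F (blk2 n b) * (if a ∈ blk2 n b then 1 else 0))
      = F (blk2 n a) := by
    refine sum_pick _ _ _ _ (by omega) (fun b hb => ?_)
    rw [mem_blk2]; generalize (3+b) % (2*n) = r; omega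
  have e3 : (∑ c ∈ Finset.range (2*n-3), F (blk3 n c) * (if a ∈ blk3 n c then 1 else 0))
      = F (blk3 n a) := by
    refine sum_pick _ _ _ _ (by omega) (fun c hc => ?_)
    rw [mem_blk3]; generalize (5+c) % (2*n) = r; omega
  rw [e1, e2, e3, if_neg (by rw [mem_c4a]; omega), if_neg (by rw [mem_c4b]; omega),
    mul_zero, mul_zero, add_zero, add_zero] at h
  exact h

lemma eq1_top2 :
    F (blk1 n (2*n-2)) + F (blk2 n (2*n-2)) = 0 := by
  have h := master (2*n-2) (by omega)
  have e1 : (∑ x ∈ Finset.range (2*n), F (blk1 n x) * (if 2*n-2 ∈ blk1 n x then 1 else 0))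
      = F (blk1 n (2*n-2)) := by
    refine sum_pick _ _ _ _ (by omega) (fun x hx => ?_)
    rw [mem_blk1]; generalize (1+x) % (2*n) = r; omega
  have e2 : (∑ b ∈ Finset.range (2*n-1), F (blk2 n b) * (if 2*n-2 ∈ blk2 n b then 1 else 0))
      = F (blk2 n (2*n-2)) := by
    refine sum_pick _ _ _ _ (by omega) (fun b hb => ?_)
    rw [mem_blk2]; generalize (3+b) % (2*n) = r; omega
  have e3 : (∑ c ∈ Finset.range (2*n-3), F (blk3 n c) * (if 2*n-2 ∈ blk3 n c then 1 else 0))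
      = 0 := by
    refine sum_none _ _ _ (fun c hc => ?_)
    rw [mem_blk3]; generalize (5+c) % (2*n) = r; omega
  rw [e1, e2, e3, if_neg (by rw [mem_c4a]; omega), if_neg (by rw [mem_c4b]; omega),
    mul_zero, mul_zero, add_zero, add_zero, add_zero] at h
  exact h

lemma eq1_top1 : F (blk1 n (2*n-1)) = 0 := by
  have h := master (2*n-1) (by omega)
  have e1 : (∑ x ∈ Finset.range (2*n), F (blk1 n x) * (if 2*n-1 ∈ blk1 n x then 1 else 0))
      = F (blk1 n (2*n-1)) := by
    refine sum_pick _ _ _ _ (by omega) (fun x hx => ?_)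
    rw [mem_blk1]; generalize (1+x) % (2*n) = r; omega
  have e2 : (∑ b ∈ Finset.range (2*n-1), F (blk2 n b) * (if 2*n-1 ∈ blk2 n b then 1 else 0))
      = 0 := by
    refine sum_none _ _ _ (fun b hb => ?_)
    rw [mem_blk2]; generalize (3+b) % (2*n) = r; omega
  have e3 : (∑ c ∈ Finset.range (2*n-3), F (blk3 n c) * (if 2*n-1 ∈ blk3 n c then 1 else 0))
      = 0 := by
    refine sum_none _ _ _ (fun c hc => ?_)
    rw [mem_blk3]; generalize (5+c) % (2*n) = r; omega
  rw [e1, e2, e3, if_neg (by rw [mem_c4a]; omega), if_neg (by rw [mem_c4b]; omega),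
    mul_zero, mul_zero, add_zero, add_zero, add_zero, add_zero] at h
  exact h

lemma eq2_0 : F (blk1 n 0) = 0 := by
  have h := master (2*n) (by omega)
  have e1 : (∑ a ∈ Finset.range (2*n), F (blk1 n a) * (if 2*n ∈ blk1 n a then 1 else 0))
      = F (blk1 n 0) := by
    refine sum_pick _ _ _ _ (by omega) (fun a ha => ?_)
    rw [mem_blk1]; generalize (1+a) % (2*n) = r; omega
  have e2 : (∑ b ∈ Finset.range (2*n-1), F (blk2 n b) * (if 2*n ∈ blk2 n b then 1 else 0))
      = 0 := by
    refine sum_none _ _ _ (fun b hb => ?_)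
    rw [mem_blk2]; generalize (3+b) % (2*n) = r; omega
  have e3 : (∑ c ∈ Finset.range (2*n-3), F (blk3 n c) * (if 2*n ∈ blk3 n c then 1 else 0))
      = 0 := by
    refine sum_none _ _ _ (fun c hc => ?_)
    rw [mem_blk3]; generalize (5+c) % (2*n) = r; omega
  rw [e1, e2, e3, if_neg (by rw [mem_c4a]; omega), if_neg (by rw [mem_c4b]; omega),
    mul_zero, mul_zero, add_zero, add_zero, add_zero, add_zero] at h
  exact h

lemma eq2_1 : F (blk1 n 1) + F (blk2 n 0) = 0 := by
  have h := master (2*n+1) (by omega)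
  have e1 : (∑ a ∈ Finset.range (2*n), F (blk1 n a) * (if 2*n+1 ∈ blk1 n a then 1 else 0))
      = F (blk1 n 1) := by
    refine sum_pick _ _ _ _ (by omega) (fun a ha => ?_)
    rw [mem_blk1]; generalize (1+a) % (2*n) = r; omega
  have e2 : (∑ b ∈ Finset.range (2*n-1), F (blk2 n b) * (if 2*n+1 ∈ blk2 n b then 1 else 0))
      = F (blk2 n 0) := by
    refine sum_pick _ _ _ _ (by omega) (fun b hb => ?_)
    rw [mem_blk2]; generalize (3+b) % (2*n) = r; omega
  have e3 : (∑ c ∈ Finset.range (2*n-3), F (blk3 n c) * (if 2*n+1 ∈ blk3 n c then 1 else 0))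
      = 0 := by
    refine sum_none _ _ _ (fun c hc => ?_)
    rw [mem_blk3]; generalize (5+c) % (2*n) = r; omega
  rw [e1, e2, e3, if_neg (by rw [mem_c4a]; omega), if_neg (by rw [mem_c4b]; omega),
    mul_zero, mul_zero, add_zero, add_zero, add_zero] at h
  exact h

lemma eq2_2 : F (blk1 n 2) + F (blk2 n 1) + F (blk3 n 0) = 0 := by
  have h := master (2*n+2) (by omega)
  have e1 : (∑ a ∈ Finset.range (2*n), F (blk1 n a) * (if 2*n+2 ∈ blk1 n a then 1 else 0))
      = F (blk1 n 2) := by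
    refine sum_pick _ _ _ _ (by omega) (fun a ha => ?_)
    rw [mem_blk1]; generalize (1+a) % (2*n) = r; omega
  have e2 : (∑ b ∈ Finset.range (2*n-1), F (blk2 n b) * (if 2*n+2 ∈ blk2 n b then 1 else 0))
      = F (blk2 n 1) := by
    refine sum_pick _ _ _ _ (by omega) (fun b hb => ?_)
    rw [mem_blk2]; generalize (3+b) % (2*n) = r; omega
  have e3 : (∑ c ∈ Finset.range (2*n-3), F (blk3 n c) * (if 2*n+2 ∈ blk3 n c then 1 else 0))
      = F (blk3 n 0) := by
    refine sum_pick _ _ _ _ (by omega) (fun c hc => ?_)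
    rw [mem_blk3]; generalize (5+c) % (2*n) = r; omega
  rw [e1, e2, e3, if_neg (by rw [mem_c4a]; omega), if_neg (by rw [mem_c4b]; omega),
    mul_zero, mul_zero, add_zero, add_zero] at h
  exact h

lemma eq3_0 :
    F (blk1 n (2*n-1)) + F (blk2 n (2*n-3)) + F (blk3 n (2*n-5)) = 0 := by
  have h := master (4*n) (by omega)
  have e1 : (∑ a ∈ Finset.range (2*n), F (blk1 n a) * (if 4*n ∈ blk1 n a then 1 else 0))
      = F (blk1 n (2*n-1)) := by
    refine sum_pick _ _ _ _ (by omega) (fun a ha => ?_)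
    rw [mem_blk1]
    rcases modcase (n := n) (by omega) (show 1+a < 4*n by omega) with ⟨h1, h2⟩ | ⟨h1, h2⟩ <;>
      rw [h2] <;> omega
  have e2 : (∑ b ∈ Finset.range (2*n-1), F (blk2 n b) * (if 4*n ∈ blk2 n b then 1 else 0))
      = F (blk2 n (2*n-3)) := by
    refine sum_pick _ _ _ _ (by omega) (fun b hb => ?_)
    rw [mem_blk2]
    rcases modcase (n := n) (by omega) (show 3+b < 4*n by omega) with ⟨h1, h2⟩ | ⟨h1, h2⟩ <;>
      rw [h2] <;> omega
  have e3 : (∑ c ∈ Finset.range (2*n-3), F (blk3 n c) * (if 4*n ∈ blk3 n c then 1 else 0))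
      = F (blk3 n (2*n-5)) := by
    refine sum_pick _ _ _ _ (by omega) (fun c hc => ?_)
    rw [mem_blk3]
    rcases modcase (n := n) (by omega) (show 5+c < 4*n by omega) with ⟨h1, h2⟩ | ⟨h1, h2⟩ <;>
      rw [h2] <;> omega
  rw [e1, e2, e3, if_neg (by rw [mem_c4a]; omega), if_neg (by rw [mem_c4b]; omega),
    mul_zero, mul_zero, add_zero, add_zero] at h
  exact h

lemma eq3_1 :
    F (blk1 n 0) + F (blk2 n (2*n-2)) + F (blk3 n (2*n-4)) = 0 := by
  have h := master (4*n+1) (by omega)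
  have e1 : (∑ a ∈ Finset.range (2*n), F (blk1 n a) * (if 4*n+1 ∈ blk1 n a then 1 else 0))
      = F (blk1 n 0) := by
    refine sum_pick _ _ _ _ (by omega) (fun a ha => ?_)
    rw [mem_blk1]
    rcases modcase (n := n) (by omega) (show 1+a < 4*n by omega) with ⟨h1, h2⟩ | ⟨h1, h2⟩ <;>
      rw [h2] <;> omega
  have e2 : (∑ b ∈ Finset.range (2*n-1), F (blk2 n b) * (if 4*n+1 ∈ blk2 n b then 1 else 0))
      = F (blk2 n (2*n-2)) := by
    refine sum_pick _ _ _ _ (by omega) (fun b hb => ?_)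
    rw [mem_blk2]
    rcases modcase (n := n) (by omega) (show 3+b < 4*n by omega) with ⟨h1, h2⟩ | ⟨h1, h2⟩ <;>
      rw [h2] <;> omega
  have e3 : (∑ c ∈ Finset.range (2*n-3), F (blk3 n c) * (if 4*n+1 ∈ blk3 n c then 1 else 0))
      = F (blk3 n (2*n-4)) := by
    refine sum_pick _ _ _ _ (by omega) (fun c hc => ?_)
    rw [mem_blk3]
    rcases modcase (n := n) (by omega) (show 5+c < 4*n by omega) with ⟨h1, h2⟩ | ⟨h1, h2⟩ <;>
      rw [h2] <;> omega
  rw [e1, e2, e3, if_neg (by rw [mem_c4a]; omega), if_neg (by rw [mem_c4b]; omega),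
    mul_zero, mul_zero, add_zero, add_zero] at h
  exact h

lemma eq3_2 : F (blk1 n 1) + F (c4a n) = 0 := by
  have h := master (4*n+2) (by omega)
  have e1 : (∑ a ∈ Finset.range (2*n), F (blk1 n a) * (if 4*n+2 ∈ blk1 n a then 1 else 0))
      = F (blk1 n 1) := by
    refine sum_pick _ _ _ _ (by omega) (fun a ha => ?_)
    rw [mem_blk1]
    rcases modcase (n := n) (by omega) (show 1+a < 4*n by omega) with ⟨h1, h2⟩ | ⟨h1, h2⟩ <;>
      rw [h2] <;> omega
  have e2 : (∑ b ∈ Finset.range (2*n-1), F (blk2 n b) * (if 4*n+2 ∈ blk2 n b then 1 else 0))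
      = 0 := by
    refine sum_none _ _ _ (fun b hb => ?_)
    rw [mem_blk2]
    rcases modcase (n := n) (by omega) (show 3+b < 4*n by omega) with ⟨h1, h2⟩ | ⟨h1, h2⟩ <;>
      rw [h2] <;> omega
  have e3 : (∑ c ∈ Finset.range (2*n-3), F (blk3 n c) * (if 4*n+2 ∈ blk3 n c then 1 else 0))
      = 0 := by
    refine sum_none _ _ _ (fun c hc => ?_)
    rw [mem_blk3]
    rcases modcase (n := n) (by omega) (show 5+c < 4*n by omega) with ⟨h1, h2⟩ | ⟨h1, h2⟩ <;>
      rw [h2] <;> omega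
  rw [e1, e2, e3, if_pos (by rw [mem_c4a]; omega), if_neg (by rw [mem_c4b]; omega),
    mul_one, mul_zero, add_zero, add_zero, add_zero] at h
  exact h

lemma eq3_3 : F (blk1 n 2) + F (blk2 n 0) + F (c4b n) = 0 := by
  have h := master (4*n+3) (by omega)
  have e1 : (∑ a ∈ Finset.range (2*n), F (blk1 n a) * (if 4*n+3 ∈ blk1 n a then 1 else 0))
      = F (blk1 n 2) := by
    refine sum_pick _ _ _ _ (by omega) (fun a ha => ?_)
    rw [mem_blk1]
    rcases modcase (n := n) (by omega) (show 1+a < 4*n by omega) with ⟨h1, h2⟩ | ⟨h1, h2⟩ <;>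
      rw [h2] <;> omega
  have e2 : (∑ b ∈ Finset.range (2*n-1), F (blk2 n b) * (if 4*n+3 ∈ blk2 n b then 1 else 0))
      = F (blk2 n 0) := by
    refine sum_pick _ _ _ _ (by omega) (fun b hb => ?_)
    rw [mem_blk2]
    rcases modcase (n := n) (by omega) (show 3+b < 4*n by omega) with ⟨h1, h2⟩ | ⟨h1, h2⟩ <;>
      rw [h2] <;> omega
  have e3 : (∑ c ∈ Finset.range (2*n-3), F (blk3 n c) * (if 4*n+3 ∈ blk3 n c then 1 else 0))
      = 0 := by
    refine sum_none _ _ _ (fun c hc => ?_)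
    rw [mem_blk3]
    rcases modcase (n := n) (by omega) (show 5+c < 4*n by omega) with ⟨h1, h2⟩ | ⟨h1, h2⟩ <;>
      rw [h2] <;> omega
  rw [e1, e2, e3, if_neg (by rw [mem_c4a]; omega), if_pos (by rw [mem_c4b]; omega),
    mul_one, mul_zero, add_zero, add_zero] at h
  exact h

lemma eq3_4 : F (blk1 n 3) + F (blk2 n 1) = 0 := by
  have h := master (4*n+4) (by omega)
  have e1 : (∑ a ∈ Finset.range (2*n), F (blk1 n a) * (if 4*n+4 ∈ blk1 n a then 1 else 0))
      = F (blk1 n 3) := by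
    refine sum_pick _ _ _ _ (by omega) (fun a ha => ?_)
    rw [mem_blk1]
    rcases modcase (n := n) (by omega) (show 1+a < 4*n by omega) with ⟨h1, h2⟩ | ⟨h1, h2⟩ <;>
      rw [h2] <;> omega
  have e2 : (∑ b ∈ Finset.range (2*n-1), F (blk2 n b) * (if 4*n+4 ∈ blk2 n b then 1 else 0))
      = F (blk2 n 1) := by
    refine sum_pick _ _ _ _ (by omega) (fun b hb => ?_)
    rw [mem_blk2]
    rcases modcase (n := n) (by omega) (show 3+b < 4*n by omega) with ⟨h1, h2⟩ | ⟨h1, h2⟩ <;>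
      rw [h2] <;> omega
  have e3 : (∑ c ∈ Finset.range (2*n-3), F (blk3 n c) * (if 4*n+4 ∈ blk3 n c then 1 else 0))
      = 0 := by
    refine sum_none _ _ _ (fun c hc => ?_)
    rw [mem_blk3]
    rcases modcase (n := n) (by omega) (show 5+c < 4*n by omega) with ⟨h1, h2⟩ | ⟨h1, h2⟩ <;>
      rw [h2] <;> omega
  rw [e1, e2, e3, if_neg (by rw [mem_c4a]; omega), if_neg (by rw [mem_c4b]; omega),
    mul_zero, mul_zero, add_zero, add_zero, add_zero] at h
  exact h

lemma eq3_gen {s : ℕ} (h1 : 5 ≤ s) (h2 : s ≤ 2*n-1) :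
    F (blk1 n (s-1)) + F (blk2 n (s-3)) + F (blk3 n (s-5)) = 0 := by
  have h := master (4*n+s) (by omega)
  have e1 : (∑ a ∈ Finset.range (2*n), F (blk1 n a) * (if 4*n+s ∈ blk1 n a then 1 else 0))
      = F (blk1 n (s-1)) := by
    refine sum_pick _ _ _ _ (by omega) (fun a ha => ?_)
    rw [mem_blk1]
    rcases modcase (n := n) (by omega) (show 1+a < 4*n by omega) with ⟨h1', h2'⟩ | ⟨h1', h2'⟩ <;>
      rw [h2'] <;> omega
  have e2 : (∑ b ∈ Finset.range (2*n-1), F (blk2 n b) * (if 4*n+s ∈ blk2 n b then 1 else 0))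
      = F (blk2 n (s-3)) := by
    refine sum_pick _ _ _ _ (by omega) (fun b hb => ?_)
    rw [mem_blk2]
    rcases modcase (n := n) (by omega) (show 3+b < 4*n by omega) with ⟨h1', h2'⟩ | ⟨h1', h2'⟩ <;>
      rw [h2'] <;> omega
  have e3 : (∑ c ∈ Finset.range (2*n-3), F (blk3 n c) * (if 4*n+s ∈ blk3 n c then 1 else 0))
      = F (blk3 n (s-5)) := by
    refine sum_pick _ _ _ _ (by omega) (fun c hc => ?_)
    rw [mem_blk3]
    rcases modcase (n := n) (by omega) (show 5+c < 4*n by omega) with ⟨h1', h2'⟩ | ⟨h1', h2'⟩ <;>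
      rw [h2'] <;> omega
  rw [e1, e2, e3, if_neg (by rw [mem_c4a]; omega), if_neg (by rw [mem_c4b]; omega),
    mul_zero, mul_zero, add_zero, add_zero] at h
  exact h


lemma claim_all : ∀ k : ℕ,
    (k+1 ≤ 2*n-1 → F (blk1 n (k+1)) = FA n (F (c4a n)) (F (c4b n)) (k+1)) ∧
    (k ≤ 2*n-3 → F (blk2 n k) = FB n (F (c4a n)) (F (c4b n)) k) ∧
    (k ≤ 2*n-4 → F (blk3 n k) = FG n (F (c4a n)) (F (c4b n)) k) := by
  have hA0 : F (blk1 n 0) = 0 := eq2_0 hn F master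
  intro k
  induction k using Nat.strong_induction_on with
  | _ k IH =>
  rcases k with _ | _ | _ | m
  · -- k = 0
    have hA1 : F (blk1 n 1) = F (c4a n) :=
      (by decide : ∀ x y : ZMod 2, x + y = 0 → x = y) _ _ (eq3_2 hn F master)
    have hB0 : F (blk2 n 0) = F (c4a n) := by
      have h := eq2_1 hn F master
      rw [hA1] at h
      exact (by decide : ∀ x y : ZMod 2, y + x = 0 → x = y) _ _ h
    have hG0 : F (blk3 n 0) = 0 := by
      have h := eq1_0 hn F master
      rw [hA0, hB0] at h
      exact (by decide : ∀ x y : ZMod 2, 0 + y + x + y = 0 → x = 0) _ _ h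
    refine ⟨fun _ => ?_, fun _ => ?_, fun _ => ?_⟩
    · show F (blk1 n 1) = FA n (F (c4a n)) (F (c4b n)) 1
      rw [hA1, FA_1 (by omega)]
    · rw [hB0, FB_0]
    · rw [hG0, FG_lo (by omega)]
  · -- k = 1
    have h0 := IH 0 (by omega)
    have hA1 : F (blk1 n 1) = F (c4a n) := by
      have := h0.1 (by omega); rwa [FA_1 (by omega)] at this
    have hB0 : F (blk2 n 0) = F (c4a n) := by
      have := h0.2.1 (by omega); rwa [FB_0] at this
    have hG0 : F (blk3 n 0) = 0 := by
      have := h0.2.2 (by omega); rwa [FG_lo (by omega)] at this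
    have hA2 : F (blk1 n 2) = F (c4a n) + F (c4b n) := by
      have h := eq3_3 hn F master
      rw [hB0] at h
      exact (by decide : ∀ x y z : ZMod 2, z + x + y = 0 → z = x + y) _ _ _ h
    have hB1 : F (blk2 n 1) = F (c4a n) + F (c4b n) := by
      have h := eq2_2 hn F master
      rw [hA2, hG0] at h
      exact (by decide : ∀ x y z : ZMod 2, (x+y) + z + 0 = 0 → z = x+y) _ _ _ h
    have hG1 : F (blk3 n 1) = 0 := by
      have h := eq1_1 hn F master
      rw [hA1, hB1] at h
      exact (by decide : ∀ x y z : ZMod 2, x + (x+y) + z + y = 0 → z = 0) _ _ _ h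
    refine ⟨fun _ => ?_, fun _ => ?_, fun _ => ?_⟩
    · show F (blk1 n 2) = FA n (F (c4a n)) (F (c4b n)) 2
      rw [hA2, FA_mid (by omega) (by omega)]
    · show F (blk2 n 1) = FB n (F (c4a n)) (F (c4b n)) 1
      rw [hB1, FB_mid (by omega) (by omega)]
    · show F (blk3 n 1) = FG n (F (c4a n)) (F (c4b n)) 1
      rw [hG1, FG_lo (by omega)]
  · -- k = 2
    have h1 := IH 1 (by omega)
    have hB1 : F (blk2 n 1) = FB n (F (c4a n)) (F (c4b n)) 1 := h1.2.1 (by omega)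
    have hG1 : F (blk3 n 1) = FG n (F (c4a n)) (F (c4b n)) 1 := h1.2.2 (by omega)
    have hA2 : F (blk1 n 2) = FA n (F (c4a n)) (F (c4b n)) 2 := h1.1 (by omega)
    have hA3 : F (blk1 n 3) = FA n (F (c4a n)) (F (c4b n)) 3 := by
      have h := eq3_4 hn F master
      rw [hB1, FB_mid (by omega) (by omega)] at h
      rw [FA_mid (by omega) (by omega)]
      exact (by decide : ∀ x y : ZMod 2, x + y = 0 → x = y) _ _ h
    have hB2 : F (blk2 n 2) = FB n (F (c4a n)) (F (c4b n)) 2 := by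
      have h := eq2_gen hn F master (t := 3) (by omega) (by omega)
      rw [show (3:ℕ)-1 = 2 from rfl, show (3:ℕ)-2 = 1 from rfl, hA3, hG1] at h
      exact ((by decide : ∀ u v w p q : ZMod 2, u + v + w + p + q = 0 → v = u + w + p + q)
        _ _ _ _ _ h).trans (L2 hn (k := 2) (by omega) (by omega))
    have hG2 : F (blk3 n 2) = FG n (F (c4a n)) (F (c4b n)) 2 := by
      have h := eq1_gen hn F master (a := 2) (by omega) (by omega)
      rw [hA2, hB2] at h
      exact ((by decide : ∀ x y z : ZMod 2, x + y + z = 0 → z = x + y) _ _ _ h).trans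
        (L3 hn (by omega) (by omega))
    exact ⟨fun _ => hA3, fun _ => hB2, fun _ => hG2⟩
  · -- k = m+3
    have hAfun : m+4 ≤ 2*n-1 → F (blk1 n (m+4)) = FA n (F (c4a n)) (F (c4b n)) (m+4) := by
      intro hc
      have hBm2 : F (blk2 n (m+2)) = FB n (F (c4a n)) (F (c4b n)) (m+2) :=
        (IH (m+2) (by omega)).2.1 (by omega)
      have hGm : F (blk3 n m) = FG n (F (c4a n)) (F (c4b n)) m :=
        (IH m (by omega)).2.2 (by omega)
      by_cases htop : m+5 ≤ 2*n-1
      · have h := eq3_gen hn F master (s := m+5) (by omega) htop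
        rw [show m+5-1 = m+4 from rfl, show m+5-3 = m+2 from rfl,
          show m+5-5 = m from rfl, hBm2, hGm] at h
        exact ((by decide : ∀ x y z : ZMod 2, x + y + z = 0 → x = y + z) _ _ _ h).trans
          (L1 hn (k := m+3) (by omega) (by omega))
      · have h := eq3_0 hn F master
        rw [show 2*n-1 = m+4 by omega, show 2*n-3 = m+2 by omega,
          show 2*n-5 = m by omega, hBm2, hGm] at h
        exact ((by decide : ∀ x y z : ZMod 2, x + y + z = 0 → x = y + z) _ _ _ h).trans
          (L1 hn (k := m+3) (by omega) (by omega))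
    have hBfun : m+3 ≤ 2*n-3 → F (blk2 n (m+3)) = FB n (F (c4a n)) (F (c4b n)) (m+3) := by
      intro hc
      have hA4 : F (blk1 n (m+4)) = FA n (F (c4a n)) (F (c4b n)) (m+4) := hAfun (by omega)
      have hGm2 : F (blk3 n (m+2)) = FG n (F (c4a n)) (F (c4b n)) (m+2) :=
        (IH (m+2) (by omega)).2.2 (by omega)
      have h := eq2_gen hn F master (t := m+4) (by omega) (by omega)
      rw [show m+4-1 = m+3 from rfl, show m+4-2 = m+2 from rfl, hA4, hGm2] at h
      exact ((by decide : ∀ u v w p q : ZMod 2, u + v + w + p + q = 0 → v = u + w + p + q)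
        _ _ _ _ _ h).trans (L2 hn (k := m+3) (by omega) (by omega))
    have hGfun : m+3 ≤ 2*n-4 → F (blk3 n (m+3)) = FG n (F (c4a n)) (F (c4b n)) (m+3) := by
      intro hc
      have hB3 : F (blk2 n (m+3)) = FB n (F (c4a n)) (F (c4b n)) (m+3) := hBfun (by omega)
      have hA3' : F (blk1 n (m+3)) = FA n (F (c4a n)) (F (c4b n)) (m+3) :=
        (IH (m+2) (by omega)).1 (by omega)
      have h := eq1_gen hn F master (a := m+3) (by omega) (by omega)
      rw [hA3', hB3] at h
      exact ((by decide : ∀ x y z : ZMod 2, x + y + z = 0 → z = x + y) _ _ _ h).trans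
        (L3 hn (by omega) (by omega))
    exact ⟨hAfun, hBfun, hGfun⟩

lemma solve : ∀ S ∈ Iset n, F S = 0 := by
  have hA : ∀ k, k ≤ 2*n-1 → F (blk1 n k) = FA n (F (c4a n)) (F (c4b n)) k := by
    intro k hk
    rcases k with _ | m
    · rw [eq2_0 hn F master, FA_0]
    · exact (claim_all hn F master m).1 (by omega)
  have hB : ∀ k, k ≤ 2*n-3 → F (blk2 n k) = FB n (F (c4a n)) (F (c4b n)) k :=
    fun k hk => (claim_all hn F master k).2.1 hk
  have hG : ∀ k, k ≤ 2*n-4 → F (blk3 n k) = FG n (F (c4a n)) (F (c4b n)) k :=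
    fun k hk => (claim_all hn F master k).2.2 hk
  have hB22 : F (blk2 n (2*n-2)) = FG n (F (c4a n)) (F (c4b n)) (2*n-4) := by
    have h := eq3_1 hn F master
    rw [eq2_0 hn F master, hG (2*n-4) (le_refl _)] at h
    exact (by decide : ∀ x y : ZMod 2, 0 + x + y = 0 → x = y) _ _ h
  have hFA1 : FA n (F (c4a n)) (F (c4b n)) (2*n-1) = 0 := by
    rw [← hA (2*n-1) (le_refl _)]
    exact eq1_top1 hn F master
  have hsum : FA n (F (c4a n)) (F (c4b n)) (2*n-2)
      + FG n (F (c4a n)) (F (c4b n)) (2*n-4) = 0 := by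
    have h := eq1_top2 hn F master
    rw [hA (2*n-2) (by omega), hB22] at h
    exact h
  have hd : F (c4a n) = 0 ∧ F (c4b n) = 0 := by
    rw [FA_hi (by omega)] at hFA1
    rw [FA_hi (by omega), FG_hi (by omega) (by omega)] at hsum
    by_cases hp : (2*n-1-n) % 2 = 0
    · rw [if_pos hp] at hFA1
      rw [if_neg (show ¬((2*n-2-n) % 2 = 0) by omega),
          if_neg (show ¬((2*n-4-n) % 2 = 0) by omega)] at hsum
      exact ⟨(by decide : ∀ x y : ZMod 2, y = 0 → x + y = 0 → x = 0) _ _ hFA1 hsum, hFA1⟩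
    · rw [if_neg hp] at hFA1
      rw [if_pos (show (2*n-2-n) % 2 = 0 by omega),
          if_pos (show (2*n-4-n) % 2 = 0 by omega)] at hsum
      exact ⟨hFA1, (by decide : ∀ x y : ZMod 2, x = 0 → y + x = 0 → y = 0) _ _ hFA1 hsum⟩
  intro S hS
  rw [Iset, Finset.mem_union, Finset.mem_union, Finset.mem_union] at hS
  rcases hS with ((h1 | h2) | h3) | h4
  · rw [cone_eq, Finset.mem_image] at h1
    obtain ⟨a, ha, rfl⟩ := h1
    rw [hA a (by have := Finset.mem_range.mp ha; omega), hd.1, hd.2, FA_zero]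
  · rw [ctwo_eq, Finset.mem_image] at h2
    obtain ⟨b, hb, rfl⟩ := h2
    have hb' := Finset.mem_range.mp hb
    by_cases hbt : b ≤ 2*n-3
    · rw [hB b hbt, hd.1, hd.2, FB_zero]
    · rw [show b = 2*n-2 by omega, hB22, hd.1, hd.2, FG_zero]
  · rw [cthree_eq, Finset.mem_image] at h3
    obtain ⟨c, hc, rfl⟩ := h3
    rw [hG c (by have := Finset.mem_range.mp hc; omega), hd.1, hd.2, FG_zero]
  · rw [cfour_eq, Finset.mem_insert, Finset.mem_singleton] at h4
    rcases h4 with rfl | rfl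
    · exact hd.1
    · exact hd.2


end Eqs

lemma split_sum (φ : Finset ℕ → ZMod 2) :
    ∑ S ∈ Iset n, φ S =
      (∑ a ∈ Finset.range (2*n), φ (blk1 n a)) +
      (∑ b ∈ Finset.range (2*n-1), φ (blk2 n b)) +
      (∑ c ∈ Finset.range (2*n-3), φ (blk3 n c)) + φ (c4a n) + φ (c4b n) := by
  rw [Iset, Finset.sum_union (Finset.disjoint_union_left.mpr
      ⟨Finset.disjoint_union_left.mpr ⟨disj14 hn, disj24 hn⟩, disj34 hn⟩),
    Finset.sum_union (Finset.disjoint_union_left.mpr ⟨disj13 hn, disj23 hn⟩),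
    Finset.sum_union (disj12 hn), cone_eq, ctwo_eq, cthree_eq, cfour_eq,
    Finset.sum_image (fun x hx y _ h => blk1_inj hn (Finset.mem_range.mp hx) h),
    Finset.sum_image (fun x hx y _ h => blk2_inj hn (Finset.mem_range.mp hx) h),
    Finset.sum_image (fun x hx y _ h => blk3_inj hn (Finset.mem_range.mp hx) h),
    Finset.sum_pair (c4a_ne_c4b hn)]
  ring

lemma li : LinearIndependent (ZMod 2)
    (fun B : {B // B ∈ Iset n} => colVec n (B : Finset ℕ)) := by
  rw [Fintype.linearIndependent_iff]
  intro g hg B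
  classical
  set F : Finset ℕ → ZMod 2 := fun S => if h : S ∈ Iset n then g ⟨S, h⟩ else 0 with hFdef
  have hgF : ∀ C : {B // B ∈ Iset n}, g C = F (C : Finset ℕ) := by
    intro C
    rw [hFdef]
    simp only [C.2, dif_pos]
  have master : ∀ i : ℕ, i < 6*n →
      (∑ a ∈ Finset.range (2*n), F (blk1 n a) * (if i ∈ blk1 n a then 1 else 0)) +
      (∑ b ∈ Finset.range (2*n-1), F (blk2 n b) * (if i ∈ blk2 n b then 1 else 0)) +
      (∑ c ∈ Finset.range (2*n-3), F (blk3 n c) * (if i ∈ blk3 n c then 1 else 0)) +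
      F (c4a n) * (if i ∈ c4a n then 1 else 0) +
      F (c4b n) * (if i ∈ c4b n then 1 else 0) = 0 := by
    intro i hi
    have h0 := congrFun hg ⟨i, hi⟩
    simp only [Finset.sum_apply, Pi.smul_apply, smul_eq_mul, Pi.zero_apply, colVec] at h0
    have h1 : (∑ C : {B // B ∈ Iset n},
        F (C : Finset ℕ) * (if i ∈ (C : Finset ℕ) then (1 : ZMod 2) else 0)) = 0 :=
      (Finset.sum_congr rfl (fun C _ => by rw [hgF C])).symm.trans h0
    rw [Finset.sum_coe_sort (Iset n)
      (fun S => F S * (if i ∈ S then (1 : ZMod 2) else 0)), split_sum hn] at h1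
    exact h1
  rw [hgF B]
  exact solve hn F master (B : Finset ℕ) B.2

lemma col_eq : ∀ S ∈ Iset n, ∃ p : ColIdx n, (Hmat n)ᵀ p = colVec n S := by
  intro S hS
  rw [Iset, Finset.mem_union, Finset.mem_union, Finset.mem_union] at hS
  rcases hS with ((h1 | h2) | h3) | h4
  · rw [cone_eq, Finset.mem_image] at h1
    obtain ⟨a, ha, rfl⟩ := h1
    have ha' := Finset.mem_range.mp ha
    refine ⟨⟨(⟨0, by omega⟩, ⟨a, by omega⟩), show ¬((0:ℕ) = n) by omega⟩, ?_⟩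
    have hblk : Blk n 0 a = blk1 n a := by
      have e1 : (0+a) % (2*n) + 2*n = 2*n + a := by
        rw [Nat.zero_add, Nat.mod_eq_of_lt (by omega)]; omega
      have e2 : (xfun n 0 + a) % (2*n) + 4*n = 4*n + (1+a) % (2*n) := by
        rw [xfun, if_pos (show 0 < n by omega)]
        show (1+a) % (2*n) + 4*n = 4*n + (1+a) % (2*n)
        generalize (1+a) % (2*n) = r; omega
      rw [Blk, blk1, e1, e2]
    funext i
    show (if (i:ℕ) ∈ Blk n 0 a then (1:ZMod 2) else 0)
        = (if (i:ℕ) ∈ blk1 n a then (1:ZMod 2) else 0)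
    rw [hblk]
  · rw [ctwo_eq, Finset.mem_image] at h2
    obtain ⟨b, hb, rfl⟩ := h2
    have hb' := Finset.mem_range.mp hb
    refine ⟨⟨(⟨1, by omega⟩, ⟨b, by omega⟩), show ¬((1:ℕ) = n) by omega⟩, ?_⟩
    have hblk : Blk n 1 b = blk2 n b := by
      have e1 : (1+b) % (2*n) + 2*n = 2*n+1+b := by
        rw [Nat.mod_eq_of_lt (by omega)]; omega
      have e2 : (xfun n 1 + b) % (2*n) + 4*n = 4*n + (3+b) % (2*n) := by
        rw [xfun, if_pos (show 1 < n by omega)]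
        show (3+b) % (2*n) + 4*n = 4*n + (3+b) % (2*n)
        generalize (3+b) % (2*n) = r; omega
      rw [Blk, blk2, e1, e2]
    funext i
    show (if (i:ℕ) ∈ Blk n 1 b then (1:ZMod 2) else 0)
        = (if (i:ℕ) ∈ blk2 n b then (1:ZMod 2) else 0)
    rw [hblk]
  · rw [cthree_eq, Finset.mem_image] at h3
    obtain ⟨c, hc, rfl⟩ := h3
    have hc' := Finset.mem_range.mp hc
    refine ⟨⟨(⟨2, by omega⟩, ⟨c, by omega⟩), show ¬((2:ℕ) = n) by omega⟩, ?_⟩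
    have hblk : Blk n 2 c = blk3 n c := by
      have e1 : (2+c) % (2*n) + 2*n = 2*n+2+c := by
        rw [Nat.mod_eq_of_lt (by omega)]; omega
      have e2 : (xfun n 2 + c) % (2*n) + 4*n = 4*n + (5+c) % (2*n) := by
        rw [xfun, if_pos (show 2 < n by omega)]
        show (5+c) % (2*n) + 4*n = 4*n + (5+c) % (2*n)
        generalize (5+c) % (2*n) = r; omega
      rw [Blk, blk3, e1, e2]
    funext i
    show (if (i:ℕ) ∈ Blk n 2 c then (1:ZMod 2) else 0)
        = (if (i:ℕ) ∈ blk3 n c then (1:ZMod 2) else 0)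
    rw [hblk]
  · rw [cfour_eq, Finset.mem_insert, Finset.mem_singleton] at h4
    have hxf : xfun n (n+1) = 2 := by
      rw [xfun, if_neg (show ¬(n+1 < n) by omega)]
      omega
    rcases h4 with rfl | rfl
    · refine ⟨⟨(⟨n+1, by omega⟩, ⟨0, by omega⟩), show ¬(n+1 = n) by omega⟩, ?_⟩
      have hblk : Blk n (n+1) 0 = c4a n := by
        have e1 : (n+1+0) % (2*n) + 2*n = 3*n+1 := by
          rw [Nat.mod_eq_of_lt (by omega)]; omega
        have e2 : (xfun n (n+1) + 0) % (2*n) + 4*n = 4*n+2 := by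
          rw [hxf, Nat.mod_eq_of_lt (by omega)]; omega
        rw [Blk, c4a, e1, e2]
      funext i
      show (if (i:ℕ) ∈ Blk n (n+1) 0 then (1:ZMod 2) else 0)
          = (if (i:ℕ) ∈ c4a n then (1:ZMod 2) else 0)
      rw [hblk]
    · refine ⟨⟨(⟨n+1, by omega⟩, ⟨1, by omega⟩), show ¬(n+1 = n) by omega⟩, ?_⟩
      have hblk : Blk n (n+1) 1 = c4b n := by
        have e1 : (n+1+1) % (2*n) + 2*n = 3*n+2 := by
          rw [Nat.mod_eq_of_lt (by omega)]; omega
        have e2 : (xfun n (n+1) + 1) % (2*n) + 4*n = 4*n+3 := by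
          rw [hxf, Nat.mod_eq_of_lt (by omega)]; omega
        rw [Blk, c4b, e1, e2]
      funext i
      show (if (i:ℕ) ∈ Blk n (n+1) 1 then (1:ZMod 2) else 0)
          = (if (i:ℕ) ∈ c4b n then (1:ZMod 2) else 0)
      rw [hblk]

lemma rank_ge : 6*n-2 ≤ (Hmat n).rank := by
  classical
  have hcard : Fintype.card {B // B ∈ Iset n} = 6*n-2 := by
    rw [Fintype.card_coe, card_Iset hn]
  have hspan := finrank_span_eq_card (li hn)
  rw [hcard] at hspan
  have hle : Submodule.span (ZMod 2)
      (Set.range (fun B : {B // B ∈ Iset n} => colVec n (B : Finset ℕ)))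
      ≤ LinearMap.range (Hmat n).mulVecLin := by
    rw [Matrix.range_mulVecLin, Submodule.span_le]
    rintro _ ⟨C, rfl⟩
    obtain ⟨p, hp⟩ := col_eq hn (C : Finset ℕ) C.2
    exact Submodule.subset_span ⟨p, hp⟩
  calc 6*n-2 = Module.finrank (ZMod 2) (Submodule.span (ZMod 2)
        (Set.range (fun B : {B // B ∈ Iset n} => colVec n (B : Finset ℕ)))) := hspan.symm
    _ ≤ Module.finrank (ZMod 2) (LinearMap.range (Hmat n).mulVecLin) :=
        Submodule.finrank_mono hle
    _ = (Hmat n).rank := rfl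

def f1 (n : ℕ) : (Fin (6*n) → ZMod 2) →ₗ[ZMod 2] ZMod 2 where
  toFun v := ∑ i : Fin (6*n), (if (i : ℕ) < 4*n then v i else 0)
  map_add' v w := by
    rw [← Finset.sum_add_distrib]
    refine Finset.sum_congr rfl (fun i _ => ?_)
    by_cases h : (i : ℕ) < 4*n
    · simp [h]
    · simp [h]
  map_smul' c v := by
    simp only [RingHom.id_apply, smul_eq_mul]
    rw [Finset.mul_sum]
    refine Finset.sum_congr rfl (fun i _ => ?_)
    by_cases h : (i : ℕ) < 4*n
    · simp [h]
    · simp [h]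

def f2 (n : ℕ) : (Fin (6*n) → ZMod 2) →ₗ[ZMod 2] ZMod 2 where
  toFun v := ∑ i : Fin (6*n), (if 2*n ≤ (i : ℕ) then v i else 0)
  map_add' v w := by
    rw [← Finset.sum_add_distrib]
    refine Finset.sum_congr rfl (fun i _ => ?_)
    by_cases h : 2*n ≤ (i : ℕ)
    · simp [h]
    · simp [h]
  map_smul' c v := by
    simp only [RingHom.id_apply, smul_eq_mul]
    rw [Finset.mul_sum]
    refine Finset.sum_congr rfl (fun i _ => ?_)
    by_cases h : 2*n ≤ (i : ℕ)
    · simp [h]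
    · simp [h]

def phiN (n : ℕ) : (Fin (6*n) → ZMod 2) →ₗ[ZMod 2] ZMod 2 × ZMod 2 :=
  (f1 n).prod (f2 n)

omit hn in
lemma sum_ind (m x y : ℕ) (hxy : x ≠ y) (Q : ℕ → Prop) [DecidablePred Q]
    (S : Finset ℕ) (hchar : ∀ k, k < m → ((Q k ∧ k ∈ S) ↔ (k = x ∨ k = y)))
    (hx : x < m) (hy : y < m) :
    ∑ i ∈ Finset.range m, (if Q i then (if i ∈ S then (1 : ZMod 2) else 0) else 0) = 0 := by
  have step : ∀ k ∈ Finset.range m,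
      (if Q k then (if k ∈ S then (1 : ZMod 2) else 0) else 0)
        = (if k = x then (1:ZMod 2) else 0) + (if k = y then (1:ZMod 2) else 0) := by
    intro k hk
    have hch := hchar k (Finset.mem_range.mp hk)
    by_cases h1 : k = x
    · obtain ⟨hQ, hS⟩ := hch.mpr (Or.inl h1)
      rw [if_pos hQ, if_pos hS, if_pos h1, if_neg (by omega)]
      decide
    by_cases h2 : k = y
    · obtain ⟨hQ, hS⟩ := hch.mpr (Or.inr h2)
      rw [if_pos hQ, if_pos hS, if_neg h1, if_pos h2]
      decide
    · rw [if_neg h1, if_neg h2]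
      by_cases hQ : Q k
      · by_cases hS : k ∈ S
        · exact absurd (hch.mp ⟨hQ, hS⟩) (by omega)
        · rw [if_pos hQ, if_neg hS]; decide
      · rw [if_neg hQ]; decide
  rw [Finset.sum_congr rfl step, Finset.sum_add_distrib,
    Finset.sum_ite_eq' (Finset.range m) x (fun _ => (1:ZMod 2)),
    Finset.sum_ite_eq' (Finset.range m) y (fun _ => (1:ZMod 2)),
    if_pos (Finset.mem_range.mpr hx), if_pos (Finset.mem_range.mpr hy)]
  decide

lemma phi_col (j a : ℕ) (hj : j < 2*n) (ha : a < 2*n) :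
    phiN n (fun i : Fin (6*n) => if (i:ℕ) ∈ Blk n j a then (1:ZMod 2) else 0) = 0 := by
  have hm2 : (j+a) % (2*n) < 2*n := Nat.mod_lt _ (by omega)
  have hm3 : (xfun n j + a) % (2*n) < 2*n := Nat.mod_lt _ (by omega)
  have hchar : ∀ k : ℕ, k ∈ Blk n j a ↔
      (k = a ∨ k = (j+a) % (2*n) + 2*n ∨ k = (xfun n j + a) % (2*n) + 4*n) := by
    intro k; simp [Blk]
  refine Prod.ext ?_ ?_
  · show (∑ i : Fin (6*n), if (i:ℕ) < 4*n then
        (if (i:ℕ) ∈ Blk n j a then (1:ZMod 2) else 0) else 0) = 0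
    rw [Fin.sum_univ_eq_sum_range
      (fun k => if k < 4*n then (if k ∈ Blk n j a then (1:ZMod 2) else 0) else 0) (6*n)]
    refine sum_ind (6*n) a ((j+a) % (2*n) + 2*n) (by omega) _ _ (fun k hk => ?_)
      (by omega) (by omega)
    rw [hchar k]
    generalize hr2 : (j+a) % (2*n) = r2 at hm2 ⊢
    generalize hr3 : (xfun n j + a) % (2*n) = r3 at hm3 ⊢
    omega
  · show (∑ i : Fin (6*n), if 2*n ≤ (i:ℕ) then
        (if (i:ℕ) ∈ Blk n j a then (1:ZMod 2) else 0) else 0) = 0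
    rw [Fin.sum_univ_eq_sum_range
      (fun k => if 2*n ≤ k then (if k ∈ Blk n j a then (1:ZMod 2) else 0) else 0) (6*n)]
    refine sum_ind (6*n) ((j+a) % (2*n) + 2*n) ((xfun n j + a) % (2*n) + 4*n)
      (by omega) _ _ (fun k hk => ?_) (by omega) (by omega)
    rw [hchar k]
    generalize hr2 : (j+a) % (2*n) = r2 at hm2 ⊢
    generalize hr3 : (xfun n j + a) % (2*n) = r3 at hm3 ⊢
    omega

lemma phi_surj : Function.Surjective (phiN n) := by
  intro y
  refine ⟨fun i => if (i:ℕ) = 0 then y.1 else if (i:ℕ) = 4*n then y.2 else 0, ?_⟩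
  have e1 : ∀ k ∈ Finset.range (6*n),
      (if k < 4*n then (if k = 0 then y.1 else if k = 4*n then y.2 else 0) else 0)
        = (if k = 0 then y.1 else 0) := by
    intro k _
    split_ifs <;> first | rfl | omega
  have e2 : ∀ k ∈ Finset.range (6*n),
      (if 2*n ≤ k then (if k = 0 then y.1 else if k = 4*n then y.2 else 0) else 0)
        = (if k = 4*n then y.2 else 0) := by
    intro k _
    split_ifs <;> first | rfl | omega
  refine Prod.ext ?_ ?_
  · show (∑ i : Fin (6*n), if (i:ℕ) < 4*n then
        (if (i:ℕ) = 0 then y.1 else if (i:ℕ) = 4*n then y.2 else 0) else 0) = y.1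
    rw [Fin.sum_univ_eq_sum_range
      (fun k => if k < 4*n then (if k = 0 then y.1 else if k = 4*n then y.2 else 0) else 0)
      (6*n), Finset.sum_congr rfl e1,
      Finset.sum_ite_eq' (Finset.range (6*n)) 0 (fun _ => y.1),
      if_pos (Finset.mem_range.mpr (by omega))]
  · show (∑ i : Fin (6*n), if 2*n ≤ (i:ℕ) then
        (if (i:ℕ) = 0 then y.1 else if (i:ℕ) = 4*n then y.2 else 0) else 0) = y.2
    rw [Fin.sum_univ_eq_sum_range
      (fun k => if 2*n ≤ k then (if k = 0 then y.1 else if k = 4*n then y.2 else 0) else 0)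
      (6*n), Finset.sum_congr rfl e2,
      Finset.sum_ite_eq' (Finset.range (6*n)) (4*n) (fun _ => y.2),
      if_pos (Finset.mem_range.mpr (by omega))]

lemma rank_le : (Hmat n).rank ≤ 6*n-2 := by
  classical
  have hker : LinearMap.range (Hmat n).mulVecLin ≤ LinearMap.ker (phiN n) := by
    rw [Matrix.range_mulVecLin, Submodule.span_le]
    rintro _ ⟨p, rfl⟩
    rw [SetLike.mem_coe, LinearMap.mem_ker]
    exact phi_col hn (p.1.1 : ℕ) (p.1.2 : ℕ) p.1.1.isLt p.1.2.isLt
  have hrn := LinearMap.finrank_range_add_finrank_ker (phiN n)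
  have hdom : Module.finrank (ZMod 2) (Fin (6*n) → ZMod 2) = 6*n := by
    rw [Module.finrank_pi, Fintype.card_fin]
  have hrange : Module.finrank (ZMod 2) (LinearMap.range (phiN n)) = 2 := by
    rw [LinearMap.range_eq_top.mpr (phi_surj hn), finrank_top]
    rw [Module.finrank_prod, Module.finrank_self]
  have hker2 : Module.finrank (ZMod 2) (LinearMap.ker (phiN n)) = 6*n-2 := by
    rw [hdom, hrange] at hrn
    omega
  calc (Hmat n).rank
      = Module.finrank (ZMod 2) (LinearMap.range (Hmat n).mulVecLin) := rfl
    _ ≤ Module.finrank (ZMod 2) (LinearMap.ker (phiN n)) := Submodule.finrank_mono hker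
    _ = 6*n-2 := hker2


end S10

theorem stmt10 (n : ℕ) (hn : 6 ≤ n) :
    -- 𝓘 consists of 6n - 2 blocks
    (Iset n).card = 6 * n - 2 ∧
    -- the corresponding 6n - 2 columns of H are linearly independent over GF(2)
    LinearIndependent (ZMod 2)
      (fun B : {B // B ∈ Iset n} => colVec n (B : Finset ℕ)) ∧
    -- consequently the rank of H over GF(2) is exactly 6n - 2
    (Hmat n).rank = 6 * n - 2 := by
  exact ⟨S10.card_Iset hn, S10.li hn,
    le_antisymm (S10.rank_le hn) (S10.rank_ge hn)⟩
end

section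
/- Fix an integer n ≥ 6 and let H be the 6n × (4n²−2n) block–point incidence matrix of the construction, viewed over GF(2). Then the dimension of the null space { v ∈ GF(2)^{4n²−2n} : H v = 0 } equals 4n² − 8n + 2; equivalently, the number of codewords in the LDPC code with parity-check matrix H is 2^{4n²−8n+2}, and the rate (b − rank(H))/b with b = 4n²−2n equals (4n² − 8n + 2)/(4n² − 2n). -/
namespace Stmt11Aux

open Matrix

variable {n : ℕ}

lemma mod_lt_2n (a : ℕ) (hn : 6 ≤ n) : a % (2*n) < 2*n := Nat.mod_lt _ (by omega)

/-- the three component functions of a row vector -/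
def fP (hn : 6 ≤ n) (u : Fin (6*n) → ZMod 2) (a : ℕ) : ZMod 2 :=
  u ⟨a % (2*n), by have := mod_lt_2n a hn; omega⟩
def gP (hn : 6 ≤ n) (u : Fin (6*n) → ZMod 2) (a : ℕ) : ZMod 2 :=
  u ⟨a % (2*n) + 2*n, by have := mod_lt_2n a hn; omega⟩
def hP (hn : 6 ≤ n) (u : Fin (6*n) → ZMod 2) (a : ℕ) : ZMod 2 :=
  u ⟨a % (2*n) + 4*n, by have := mod_lt_2n a hn; omega⟩

variable (hn : 6 ≤ n)

lemma fP_congr (u) {a b : ℕ} (h : a % (2*n) = b % (2*n)) : fP hn u a = fP hn u b := by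
  unfold fP; congr 1; exact Fin.ext h
lemma gP_congr (u) {a b : ℕ} (h : a % (2*n) = b % (2*n)) : gP hn u a = gP hn u b := by
  unfold gP; congr 1; simp only [Fin.mk.injEq]; omega
lemma hP_congr (u) {a b : ℕ} (h : a % (2*n) = b % (2*n)) : hP hn u a = hP hn u b := by
  unfold hP; congr 1; simp only [Fin.mk.injEq]; omega

lemma gP_per (u) (a : ℕ) : gP hn u (a + 2*n) = gP hn u a :=
  gP_congr hn u (Nat.add_mod_right a (2*n))
lemma hP_per (u) (a : ℕ) : hP hn u (a + 2*n) = hP hn u a :=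
  hP_congr hn u (Nat.add_mod_right a (2*n))

/-- the core structure result: any vector in the left kernel has constant components -/
lemma struct (u : Fin (6*n) → ZMod 2)
    (hE : ∀ j a : ℕ, j < 2*n → j ≠ n →
      fP hn u a + gP hn u (j+a) + hP hn u (xfun n j + a) = 0) :
    (∀ b, gP hn u b = gP hn u 0) ∧ (∀ b, hP hn u b = hP hn u 0) ∧
      (∀ a, fP hn u a = gP hn u 0 + hP hn u 0) := by
  have two : (2 : ZMod 2) = 0 := rfl
  -- pairing lemma, special form
  have hB0 : ∀ k a : ℕ, k + 2 ≤ n →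
      gP hn u (k+a) + gP hn u (n+1+k+a) = hP hn u (2*k+1+a) + hP hn u (2*k+2+a) := by
    intro k a hk
    have h1 := hE k a (by omega) (by omega)
    have h2 := hE (n+1+k) a (by omega) (by omega)
    rw [show xfun n k = 2*k+1 from by unfold xfun; rw [if_pos (by omega)]] at h1
    rw [show xfun n (n+1+k) = 2*k+2 from by unfold xfun; rw [if_neg (by omega)]; omega] at h2
    linear_combination h1 + h2
      - (fP hn u a + hP hn u (2*k+1+a) + hP hn u (2*k+2+a)) * two
  -- pairing lemma, general form
  have hB : ∀ k b : ℕ, k + 2 ≤ n →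
      gP hn u b + gP hn u (n+1+b) = hP hn u (k+1+b) + hP hn u (k+2+b) := by
    intro k b hk
    have h := hB0 k (b + 2*n - k) hk
    rw [show k + (b+2*n-k) = b + 2*n by omega,
        show n+1+k+(b+2*n-k) = (n+1+b) + 2*n by omega,
        show 2*k+1+(b+2*n-k) = (k+1+b) + 2*n by omega,
        show 2*k+2+(b+2*n-k) = (k+2+b) + 2*n by omega,
        gP_per, gP_per, hP_per, hP_per] at h
    exact h
  -- the difference function of h is "shift invariant"
  have hDc : ∀ b : ℕ, hP hn u (b+1) + hP hn u (b+2) = hP hn u (b+2) + hP hn u (b+3) := by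
    intro b
    have h1 := hB 0 b (by omega)
    have h2 := hB 1 b (by omega)
    rw [show 0+1+b = b+1 by omega, show 0+2+b = b+2 by omega] at h1
    rw [show 1+1+b = b+2 by omega, show 1+2+b = b+3 by omega] at h2
    exact h1.symm.trans h2
  have hDconst' : ∀ b : ℕ, hP hn u (b+1) + hP hn u (b+2) = hP hn u 1 + hP hn u 2 := by
    intro b
    induction b with
    | zero => norm_num
    | succ m ih =>
      rw [show m+1+1 = m+2 by omega, show m+1+2 = m+3 by omega]
      rw [← hDc m]; exact ih
  have hD : ∀ b : ℕ, hP hn u b + hP hn u (b+1) = hP hn u 1 + hP hn u 2 := by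
    intro b
    match b with
    | 0 =>
      have h := hDconst' (2*n - 1)
      rw [show 2*n-1+1 = 0 + 2*n by omega, show 2*n-1+2 = 1 + 2*n by omega,
          hP_per, hP_per] at h
      simpa using h
    | (m+1) =>
      have h := hDconst' m
      rw [show m+2 = m+1+1 by omega] at h
      exact h
  -- h has period 2
  have hHH : ∀ b : ℕ, hP hn u b + hP hn u (b+2) = 0 := by
    intro b
    have e1 := hD b
    have e2 := hD (b+1)
    rw [show b+1+1 = b+2 by omega] at e2
    linear_combination e1 + e2 + (hP hn u 1 + hP hn u 2 - hP hn u (b+1)) * two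
  -- g is constant
  have hGG : ∀ a : ℕ, gP hn u a + gP hn u (a+1) = 0 := by
    intro a
    have h1 := hE 0 a (by omega) (by omega)
    have h2 := hE 1 a (by omega) (by omega)
    rw [show xfun n 0 = 1 from by unfold xfun; rw [if_pos (by omega)],
        show (0:ℕ)+a = a by omega] at h1
    rw [show xfun n 1 = 3 from by unfold xfun; rw [if_pos (by omega)],
        show (1:ℕ)+a = a+1 by omega, show (3:ℕ)+a = a+3 by omega] at h2
    have hh := hHH (a+1)
    rw [show a+1+2 = a+3 by omega] at hh
    rw [show (1:ℕ)+a = a+1 by omega] at h1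
    linear_combination h1 + h2 + hh - (fP hn u a + hP hn u (a+1) + hP hn u (a+3)) * two
  have hgc : ∀ b : ℕ, gP hn u b = gP hn u 0 := by
    intro b
    induction b with
    | zero => rfl
    | succ m ih =>
      have h := hGG m
      have : gP hn u (m+1) = gP hn u m := by linear_combination h - gP hn u m * two
      rw [this]; exact ih
  -- the constant difference of h is zero
  have hc0 : hP hn u 1 + hP hn u 2 = 0 := by
    have h := hB 0 0 (by omega)
    rw [show (0:ℕ)+1+0 = 1 by omega, show (0:ℕ)+2+0 = 2 by omega,
        show n+1+0 = n+1 by omega, hgc (n+1)] at h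
    linear_combination h.symm + gP hn u 0 * two
  have hD0 : ∀ b : ℕ, hP hn u b + hP hn u (b+1) = 0 := fun b => (hD b).trans hc0
  have hhc : ∀ b : ℕ, hP hn u b = hP hn u 0 := by
    intro b
    induction b with
    | zero => rfl
    | succ m ih =>
      have h := hD0 m
      have : hP hn u (m+1) = hP hn u m := by linear_combination h - hP hn u m * two
      rw [this]; exact ih
  refine ⟨hgc, hhc, ?_⟩
  intro a
  have h1 := hE 0 a (by omega) (by omega)
  rw [show xfun n 0 = 1 from by unfold xfun; rw [if_pos (by omega)],
      show (0:ℕ)+a = a by omega, show (1:ℕ)+a = a+1 by omega, hgc a, hhc (a+1)] at h1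
  linear_combination h1 - (gP hn u 0 + hP hn u 0) * two

/-- computing a coordinate of `Hᵀ *ᵥ u` -/
lemma mulVecT (u : Fin (6*n) → ZMod 2) (j a : Fin (2*n)) (hne : (j:ℕ) ≠ n) :
    (Hmat n)ᵀ.mulVec u ⟨(j, a), hne⟩
      = u ⟨(a : ℕ), by have := a.2; omega⟩
        + u ⟨((j:ℕ) + (a:ℕ)) % (2*n) + 2*n, by have := mod_lt_2n ((j:ℕ)+(a:ℕ)) hn; omega⟩
        + u ⟨(xfun n (j:ℕ) + (a:ℕ)) % (2*n) + 4*n,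
            by have := mod_lt_2n (xfun n (j:ℕ)+(a:ℕ)) hn; omega⟩ := by
  have hA : (a:ℕ) < 2*n := a.2
  have hm2 : ((j:ℕ) + (a:ℕ)) % (2*n) < 2*n := mod_lt_2n _ hn
  have hm3 : (xfun n (j:ℕ) + (a:ℕ)) % (2*n) < 2*n := mod_lt_2n _ hn
  set i1 : Fin (6*n) := ⟨(a:ℕ), by omega⟩ with hi1
  set i2 : Fin (6*n) := ⟨((j:ℕ)+(a:ℕ)) % (2*n) + 2*n, by omega⟩ with hi2
  set i3 : Fin (6*n) := ⟨(xfun n (j:ℕ)+(a:ℕ)) % (2*n) + 4*n, by omega⟩ with hi3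
  have key : ∀ i : Fin (6*n),
      ((i:ℕ) ∈ Blk n (j:ℕ) (a:ℕ)) ↔ i ∈ ({i1,i2,i3} : Finset (Fin (6*n))) := by
    intro i
    simp [Blk, Fin.ext_iff, hi1, hi2, hi3]
  have step : (Hmat n)ᵀ.mulVec u ⟨(j, a), hne⟩
      = ∑ i : Fin (6*n), if i ∈ ({i1,i2,i3} : Finset (Fin (6*n))) then u i else 0 := by
    simp only [Matrix.mulVec, dotProduct, Matrix.transpose_apply, Hmat]
    refine Finset.sum_congr rfl fun i _ => ?_
    rw [ite_mul, one_mul, zero_mul]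
    exact if_congr (key i) rfl rfl
  rw [step, Finset.sum_ite_mem, Finset.univ_inter]
  have d12 : i1 ≠ i2 := by simp [Fin.ext_iff, hi1, hi2]; omega
  have d13 : i1 ≠ i3 := by simp [Fin.ext_iff, hi1, hi3]; omega
  have d23 : i2 ≠ i3 := by simp [Fin.ext_iff, hi2, hi3]; omega
  rw [show ({i1,i2,i3} : Finset (Fin (6*n))) = insert i1 (insert i2 {i3}) from rfl,
      Finset.sum_insert (by simp [d12, d13]), Finset.sum_insert (by simp [d23]),
      Finset.sum_singleton, ← add_assoc]

/-- the 2-dimensional space of constant row vectors -/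
def phi (n : ℕ) : (ZMod 2 × ZMod 2) →ₗ[ZMod 2] (Fin (6*n) → ZMod 2) where
  toFun c := fun i => if (i:ℕ) < 2*n then c.1 + c.2 else if (i:ℕ) < 4*n then c.1 else c.2
  map_add' c d := by
    funext i
    by_cases h1 : (i:ℕ) < 2*n <;> by_cases h2 : (i:ℕ) < 4*n <;>
      simp [h1, h2] <;> ring
  map_smul' r c := by
    funext i
    by_cases h1 : (i:ℕ) < 2*n <;> by_cases h2 : (i:ℕ) < 4*n <;>
      simp [h1, h2] <;> ring

lemma ker_eq (hn : 6 ≤ n) : LinearMap.ker ((Hmat n)ᵀ).mulVecLin = LinearMap.range (phi n) := by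
  have two : (2 : ZMod 2) = 0 := rfl
  ext u
  rw [LinearMap.mem_ker, LinearMap.mem_range]
  constructor
  · intro hu
    have hcol : ∀ (j a : Fin (2*n)) (hne : (j:ℕ) ≠ n), (Hmat n)ᵀ.mulVec u ⟨(j, a), hne⟩ = 0 := by
      intro j a hne
      exact congrFun hu ⟨(j, a), hne⟩
    have hE : ∀ j a : ℕ, j < 2*n → j ≠ n →
        fP hn u a + gP hn u (j+a) + hP hn u (xfun n j + a) = 0 := by
      intro j a hj hjn
      have h := hcol ⟨j, hj⟩ ⟨a % (2*n), mod_lt_2n a hn⟩ hjn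
      rw [mulVecT hn] at h
      have e1 : fP hn u a = u ⟨a % (2*n), by have := mod_lt_2n a hn; omega⟩ := rfl
      have e2 : gP hn u (j+a) = u ⟨(j + a % (2*n)) % (2*n) + 2*n,
          by have := mod_lt_2n (j + a % (2*n)) hn; omega⟩ := by
        apply gP_congr hn u
        rw [Nat.add_mod_mod]
      have e3 : hP hn u (xfun n j + a) = u ⟨(xfun n j + a % (2*n)) % (2*n) + 4*n,
          by have := mod_lt_2n (xfun n j + a % (2*n)) hn; omega⟩ := by
        apply hP_congr hn u
        rw [Nat.add_mod_mod]
      rw [e1, e2, e3]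
      exact h
    obtain ⟨hg, hh, hf⟩ := struct hn u hE
    refine ⟨(gP hn u 0, hP hn u 0), ?_⟩
    funext i
    show (if (i:ℕ) < 2*n then gP hn u 0 + hP hn u 0
      else if (i:ℕ) < 4*n then gP hn u 0 else hP hn u 0) = u i
    have hi := i.2
    by_cases h1 : (i:ℕ) < 2*n
    · rw [if_pos h1, ← hf (i:ℕ)]
      show _ = u ⟨(i:ℕ), i.2⟩
      unfold fP
      congr 1
      simp only [Fin.mk.injEq]
      exact Nat.mod_eq_of_lt h1
    · rw [if_neg h1]
      by_cases h2 : (i:ℕ) < 4*n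
      · rw [if_pos h2, ← hg ((i:ℕ) - 2*n)]
        show _ = u ⟨(i:ℕ), i.2⟩
        unfold gP
        congr 1
        simp only [Fin.mk.injEq]
        have : ((i:ℕ) - 2*n) % (2*n) = (i:ℕ) - 2*n := Nat.mod_eq_of_lt (by omega)
        omega
      · rw [if_neg h2, ← hh ((i:ℕ) - 4*n)]
        show _ = u ⟨(i:ℕ), i.2⟩
        unfold hP
        congr 1
        simp only [Fin.mk.injEq]
        have : ((i:ℕ) - 4*n) % (2*n) = (i:ℕ) - 4*n := Nat.mod_eq_of_lt (by omega)
        omega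
  · rintro ⟨c, rfl⟩
    rw [show (Hmat n)ᵀ.mulVecLin (phi n c) = (Hmat n)ᵀ.mulVec (phi n c) from rfl]
    funext p
    obtain ⟨⟨j, a⟩, hne⟩ := p
    rw [mulVecT hn]
    have hA : (a:ℕ) < 2*n := a.2
    have hm2 : ((j:ℕ) + (a:ℕ)) % (2*n) < 2*n := mod_lt_2n _ hn
    have hm3 : (xfun n (j:ℕ) + (a:ℕ)) % (2*n) < 2*n := mod_lt_2n _ hn
    simp only [phi, LinearMap.coe_mk, AddHom.coe_mk, Pi.zero_apply]
    split_ifs <;> first | omega | linear_combination (c.1 + c.2) * two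

end Stmt11Aux

open Stmt11Aux Matrix in
theorem stmt11 (n : ℕ) (hn : 6 ≤ n) :
    -- the null space of H has dimension 4n² - 8n + 2
    Module.finrank (ZMod 2) (LinearMap.ker (Hmat n).mulVecLin) = 4 * n ^ 2 - 8 * n + 2 ∧
    -- equivalently, the LDPC code has 2^(4n² - 8n + 2) codewords
    Nat.card {v : ColIdx n → ZMod 2 // (Hmat n).mulVec v = 0} =
      2 ^ (4 * n ^ 2 - 8 * n + 2) ∧
    -- and the rate (b - rank H)/b with b = 4n² - 2n equals (4n² - 8n + 2)/(4n² - 2n)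
    ((4 * n ^ 2 - 2 * n : ℚ) - ((Hmat n).rank : ℚ)) / (4 * n ^ 2 - 2 * n : ℚ) =
      ((4 * n ^ 2 - 8 * n + 2 : ℕ) : ℚ) / (4 * n ^ 2 - 2 * n : ℚ) := by
  -- cardinality of the column index type
  have ecard : Fintype.card (ColIdx n) = 4 * n ^ 2 - 2 * n := by
    have e : ColIdx n ≃ ({j : Fin (2*n) // (j:ℕ) ≠ n} × Fin (2*n)) :=
      { toFun := fun p => (⟨p.1.1, p.2⟩, p.1.2),
        invFun := fun q => ⟨(q.1, q.2), q.1.2⟩,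
        left_inv := fun p => rfl,
        right_inv := fun q => rfl }
    rw [Fintype.card_congr e, Fintype.card_prod, Fintype.card_fin]
    have h1 : Fintype.card {j : Fin (2*n) // (j:ℕ) = n} = 1 := by
      rw [Fintype.card_eq_one_iff]
      exact ⟨⟨⟨n, by omega⟩, rfl⟩, fun y => Subtype.ext (Fin.ext y.2)⟩
    have h2 : Fintype.card {j : Fin (2*n) // (j:ℕ) ≠ n} = 2*n - 1 := by
      have h := Fintype.card_subtype_compl (fun j : Fin (2*n) => (j:ℕ) = n)
      rw [h1, Fintype.card_fin] at h
      exact h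
    rw [h2, Nat.sub_mul, one_mul]
    have h3 : 2*n*(2*n) = 4*n^2 := by ring
    rw [h3]
  -- injectivity of phi
  have hinj : Function.Injective (phi n) := by
    intro c d h
    have h1 := congrFun h ⟨2*n, by omega⟩
    have h2 := congrFun h ⟨4*n, by omega⟩
    simp only [phi, LinearMap.coe_mk, AddHom.coe_mk] at h1 h2
    simp only [if_neg (show ¬(2*n < 2*n) by omega), if_pos (show 2*n < 4*n by omega),
      if_neg (show ¬(4*n < 2*n) by omega), if_neg (show ¬(4*n < 4*n) by omega)] at h1 h2
    exact Prod.ext h1 h2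
  have hker2 : Module.finrank (ZMod 2) (LinearMap.ker ((Hmat n)ᵀ).mulVecLin) = 2 := by
    rw [ker_eq hn, LinearMap.finrank_range_of_inj hinj, Module.finrank_prod,
        Module.finrank_self]
  -- rank of H
  have hrank : (Hmat n).rank = 6*n - 2 := by
    rw [← Matrix.rank_transpose]
    have h := LinearMap.finrank_range_add_finrank_ker ((Hmat n)ᵀ).mulVecLin
    rw [hker2, Module.finrank_fin_fun] at h
    rw [Matrix.rank]
    omega
  -- dimension of the null space
  have hdim : Module.finrank (ZMod 2) (LinearMap.ker (Hmat n).mulVecLin)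
      = 4 * n ^ 2 - 8 * n + 2 := by
    have h := LinearMap.finrank_range_add_finrank_ker (Hmat n).mulVecLin
    rw [Module.finrank_pi, ecard,
        show Module.finrank (ZMod 2) (LinearMap.range (Hmat n).mulVecLin) = (Hmat n).rank
          from rfl, hrank] at h
    obtain ⟨k, hk1, hk2⟩ : ∃ k, n^2 = k ∧ 6*n ≤ k := ⟨n^2, rfl, by nlinarith⟩
    rw [hk1] at h ⊢
    omega
  refine ⟨hdim, ?_, ?_⟩
  · have e : {v : ColIdx n → ZMod 2 // (Hmat n).mulVec v = 0}
        ≃ LinearMap.ker (Hmat n).mulVecLin :=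
      Equiv.subtypeEquivRight (fun v => by simp [LinearMap.mem_ker, Matrix.mulVecLin_apply])
    rw [Nat.card_congr e]
    letI : Fintype (LinearMap.ker (Hmat n).mulVecLin) := Fintype.ofFinite _
    rw [Nat.card_eq_fintype_card, Module.card_eq_pow_finrank (K := ZMod 2), ZMod.card, hdim]
  · rw [hrank]
    have h8 : 8*n ≤ 4*n^2 := by nlinarith
    have e : ((4*n^2 - 8*n + 2 : ℕ) : ℚ) = (4*n^2 - 2*n : ℚ) - ((6*n - 2 : ℕ) : ℚ) := by
      rw [Nat.cast_add, Nat.cast_sub h8, Nat.cast_sub (show 2 ≤ 6*n by omega)]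
      push_cast
      ring
    rw [e]
end

section
/- Fix an integer n ≥ 3 and let H be the 6n × (4n²−2n) block–point incidence matrix of the construction, viewed over GF(2). Then the six columns of H corresponding to the six blocks {0, 2n+1, 4n+3}, {0, 2n+2, 4n+5}, {1, 2n+2, 4n+4}, {1, 3n+2, 4n+3}, {2n−1, 2n+1, 4n+4}, {2n−1, 3n+2, 4n+5} sum to the zero vector over GF(2); hence these six columns form a linearly dependent set and the LDPC code with parity-check matrix H contains a codeword of Hamming weight 6. -/
theorem stmt12 (n : ℕ) (hn : 3 ≤ n) :
    -- the six columns of H corresponding to the six listed blocks sum to zero over GF(2)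
    (∀ i : Fin (6 * n),
      colVec n {0, 2 * n + 1, 4 * n + 3} i +
      colVec n {0, 2 * n + 2, 4 * n + 5} i +
      colVec n {1, 2 * n + 2, 4 * n + 4} i +
      colVec n {1, 3 * n + 2, 4 * n + 3} i +
      colVec n {2 * n - 1, 2 * n + 1, 4 * n + 4} i +
      colVec n {2 * n - 1, 3 * n + 2, 4 * n + 5} i = 0) ∧
    -- hence the LDPC code contains a codeword of Hamming weight 6
    (∃ v : ColIdx n → ZMod 2, (Hmat n).mulVec v = 0 ∧
      (Finset.univ.filter fun p : ColIdx n => v p ≠ 0).card = 6) := by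
  constructor
  · intro i
    simp only [colVec, Finset.mem_insert, Finset.mem_singleton]
    split_ifs <;> first | decide | (exfalso; omega)
  ·
    have h0 : (0:ℕ) < 2*n := by omega
    have h1 : (1:ℕ) < 2*n := by omega
    have h2 : (2:ℕ) < 2*n := by omega
    have hA : n+1 < 2*n := by omega
    have hB : n+2 < 2*n := by omega
    set p1 : ColIdx n := ⟨(⟨0, h0⟩, ⟨2, h2⟩), by show (0:ℕ) ≠ n; omega⟩ with hp1
    set p2 : ColIdx n := ⟨(⟨2, h2⟩, ⟨0, h0⟩), by show (2:ℕ) ≠ n; omega⟩ with hp2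
    set p3 : ColIdx n := ⟨(⟨n+1, hA⟩, ⟨1, h1⟩), by show n+1 ≠ n; omega⟩ with hp3
    set p4 : ColIdx n := ⟨(⟨n+1, hA⟩, ⟨2, h2⟩), by show n+1 ≠ n; omega⟩ with hp4
    set p5 : ColIdx n := ⟨(⟨n+2, hB⟩, ⟨0, h0⟩), by show n+2 ≠ n; omega⟩ with hp5
    set p6 : ColIdx n := ⟨(⟨n+2, hB⟩, ⟨1, h1⟩), by show n+2 ≠ n; omega⟩ with hp6
    refine ⟨fun p => (if p = p1 then 1 else 0) + (if p = p2 then 1 else 0) +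
        (if p = p3 then 1 else 0) + (if p = p4 then 1 else 0) +
        (if p = p5 then 1 else 0) + (if p = p6 then 1 else 0), ?_, ?_⟩
    · funext i
      have step : (Hmat n).mulVec (fun p => (if p = p1 then 1 else 0) + (if p = p2 then 1 else 0) +
        (if p = p3 then 1 else 0) + (if p = p4 then 1 else 0) +
        (if p = p5 then 1 else 0) + (if p = p6 then 1 else 0)) i
          = Hmat n i p1 + Hmat n i p2 + Hmat n i p3 + Hmat n i p4 + Hmat n i p5 + Hmat n i p6 := by
        simp [Matrix.mulVec, dotProduct, mul_add, mul_ite, mul_one, mul_zero,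
          Finset.sum_add_distrib, Finset.sum_ite_eq']
      rw [step]
      have hx0 : xfun n 0 = 1 := by unfold xfun; split <;> omega
      have hx2 : xfun n 2 = 5 := by unfold xfun; split <;> omega
      have hxA : xfun n (n+1) = 2 := by unfold xfun; split <;> omega
      have hxB : xfun n (n+2) = 4 := by unfold xfun; split <;> omega
      simp only [Hmat, Blk, hp1, hp2, hp3, hp4, hp5, hp6, hx0, hx2, hxA, hxB,
        Finset.mem_insert, Finset.mem_singleton]
      have m1 : (0+2) % (2*n) = 2 := by rw [Nat.mod_eq_of_lt (by omega)]
      have m2 : (1+2) % (2*n) = 3 := by rw [Nat.mod_eq_of_lt (by omega)]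
      have m3 : (2+0) % (2*n) = 2 := by rw [Nat.mod_eq_of_lt (by omega)]
      have m4 : (5+0) % (2*n) = 5 := by rw [Nat.mod_eq_of_lt (by omega)]
      have m5 : (n+1+1) % (2*n) = n+2 := by rw [Nat.mod_eq_of_lt (by omega)]
      have m6 : (2+1) % (2*n) = 3 := by rw [Nat.mod_eq_of_lt (by omega)]
      have m7 : (2+2) % (2*n) = 4 := by rw [Nat.mod_eq_of_lt (by omega)]
      have m8 : (n+2+0) % (2*n) = n+2 := by rw [Nat.mod_eq_of_lt (by omega)]
      have m9 : (4+0) % (2*n) = 4 := by rw [Nat.mod_eq_of_lt (by omega)]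
      have m10 : (4+1) % (2*n) = 5 := by rw [Nat.mod_eq_of_lt (by omega)]
      have e4 : (n+1+2) % (2*n) = (n+3) % (2*n) := by rw [show n+1+2 = n+3 from by omega]
      have e6 : (n+2+1) % (2*n) = (n+3) % (2*n) := by rw [show n+2+1 = n+3 from by omega]
      have hM : (n+3) % (2*n) = n+3 ∨ ((n+3) % (2*n) = 0 ∧ n = 3) := by
        rcases Nat.lt_or_ge (n+3) (2*n) with h | h
        · exact Or.inl (Nat.mod_eq_of_lt h)
        · refine Or.inr ⟨?_, by omega⟩
          rw [show n+3 = 2*n from by omega, Nat.mod_self]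
      simp only [m1, m2, m3, m4, m5, m6, m7, m8, m9, m10, e4, e6]
      generalize hg : (n+3) % (2*n) = M at hM ⊢
      rw [Pi.zero_apply]
      clear step hg e4 e6 m1 m2 m3 m4 m5 m6 m7 m8 m9 m10 hx0 hx2 hxA hxB hp1 hp2 hp3 hp4 hp5 hp6
      split_ifs <;> first | decide | (exfalso; omega)
    ·
      have ne12 : p1 ≠ p2 := by simp only [hp1, hp2, ne_eq, Subtype.mk.injEq, Prod.mk.injEq, Fin.mk.injEq]; omega
      have ne13 : p1 ≠ p3 := by simp only [hp1, hp3, ne_eq, Subtype.mk.injEq, Prod.mk.injEq, Fin.mk.injEq]; omega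
      have ne14 : p1 ≠ p4 := by simp only [hp1, hp4, ne_eq, Subtype.mk.injEq, Prod.mk.injEq, Fin.mk.injEq]; omega
      have ne15 : p1 ≠ p5 := by simp only [hp1, hp5, ne_eq, Subtype.mk.injEq, Prod.mk.injEq, Fin.mk.injEq]; omega
      have ne16 : p1 ≠ p6 := by simp only [hp1, hp6, ne_eq, Subtype.mk.injEq, Prod.mk.injEq, Fin.mk.injEq]; omega
      have ne23 : p2 ≠ p3 := by simp only [hp2, hp3, ne_eq, Subtype.mk.injEq, Prod.mk.injEq, Fin.mk.injEq]; omega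
      have ne24 : p2 ≠ p4 := by simp only [hp2, hp4, ne_eq, Subtype.mk.injEq, Prod.mk.injEq, Fin.mk.injEq]; omega
      have ne25 : p2 ≠ p5 := by simp only [hp2, hp5, ne_eq, Subtype.mk.injEq, Prod.mk.injEq, Fin.mk.injEq]; omega
      have ne26 : p2 ≠ p6 := by simp only [hp2, hp6, ne_eq, Subtype.mk.injEq, Prod.mk.injEq, Fin.mk.injEq]; omega
      have ne34 : p3 ≠ p4 := by simp only [hp3, hp4, ne_eq, Subtype.mk.injEq, Prod.mk.injEq, Fin.mk.injEq]; omega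
      have ne35 : p3 ≠ p5 := by simp only [hp3, hp5, ne_eq, Subtype.mk.injEq, Prod.mk.injEq, Fin.mk.injEq]; omega
      have ne36 : p3 ≠ p6 := by simp only [hp3, hp6, ne_eq, Subtype.mk.injEq, Prod.mk.injEq, Fin.mk.injEq]; omega
      have ne45 : p4 ≠ p5 := by simp only [hp4, hp5, ne_eq, Subtype.mk.injEq, Prod.mk.injEq, Fin.mk.injEq]; omega
      have ne46 : p4 ≠ p6 := by simp only [hp4, hp6, ne_eq, Subtype.mk.injEq, Prod.mk.injEq, Fin.mk.injEq]; omega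
      have ne56 : p5 ≠ p6 := by simp only [hp5, hp6, ne_eq, Subtype.mk.injEq, Prod.mk.injEq, Fin.mk.injEq]; omega
      have hfe : (Finset.univ.filter fun p : ColIdx n =>
          ((if p = p1 then (1:ZMod 2) else 0) + (if p = p2 then 1 else 0) +
          (if p = p3 then 1 else 0) + (if p = p4 then 1 else 0) +
          (if p = p5 then 1 else 0) + (if p = p6 then 1 else 0)) ≠ 0)
          = {p1, p2, p3, p4, p5, p6} := by
        ext q
        simp only [Finset.mem_filter, Finset.mem_univ, true_and, Finset.mem_insert,
          Finset.mem_singleton]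
        constructor
        · intro h
          by_contra hc
          push_neg at hc
          simp [hc.1, hc.2.1, hc.2.2.1, hc.2.2.2.1, hc.2.2.2.2.1, hc.2.2.2.2.2] at h
        · rintro (rfl|rfl|rfl|rfl|rfl|rfl) <;> simp [ne12, ne13, ne14, ne15, ne16, ne23, ne24, ne25, ne26, ne34, ne35, ne36, ne45, ne46, ne56, ne12.symm, ne13.symm, ne14.symm, ne15.symm, ne16.symm, ne23.symm, ne24.symm, ne25.symm, ne26.symm, ne34.symm, ne35.symm, ne36.symm, ne45.symm, ne46.symm, ne56.symm]
      rw [hfe]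
      rw [Finset.card_insert_of_notMem (by simp [ne12, ne13, ne14, ne15, ne16]),
        Finset.card_insert_of_notMem (by simp [ne23, ne24, ne25, ne26]),
        Finset.card_insert_of_notMem (by simp [ne34, ne35, ne36]),
        Finset.card_insert_of_notMem (by simp [ne45, ne46]),
        Finset.card_insert_of_notMem (by simp [ne56]),
        Finset.card_singleton]
end

section
/- Fix an integer n ≥ 2 and define x : ℤ_{2n} → ℤ_{2n} by x(j) = 2j+1 mod 2n for 0 ≤ j ≤ n−1 and x(j) = 2(j−n) mod 2n for n ≤ j ≤ 2n−1. Define two 2n × 2n arrays Y and Z with entries in ℤ_{2n} by Y(i,c) = (i + c) mod 2n and Z(i,c) = (x(i) + c) mod 2n. Then (i) Y and Z are Latin squares of order 2n (each symbol occurs exactly once in every row and every column), and (ii) Y and Z are pseudo-orthogonal: for every symbol a ∈ ℤ_{2n}, over the cells (i,c) with Y(i,c) = a, the value Z(i,c) takes each symbol b ∈ ℤ_{2n} \ {a, (a+n) mod 2n} exactly once, takes the symbol (a+n) mod 2n exactly twice, and never takes the symbol a. -/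
/-- The Latin square Y: Y(i,c) = (i + c) mod 2n. -/
def Ysq (n i c : ℕ) : ℕ := (i + c) % (2 * n)

/-- The Latin square Z: Z(i,c) = (x(i) + c) mod 2n. -/
def Zsq (n i c : ℕ) : ℕ := (xfun n i + c) % (2 * n)

/-- Number of cells (i,c) in which Y takes value a and Z takes value b. -/
def pairCount (n a b : ℕ) : ℕ :=
  ((Finset.range (2 * n) ×ˢ Finset.range (2 * n)).filter
    (fun p : ℕ × ℕ => Ysq n p.1 p.2 = a ∧ Zsq n p.1 p.2 = b)).card

lemma cancel_left (m t x y : ℕ) (hx : x < m) (hy : y < m)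
    (h : (t + x) % m = (t + y) % m) : x = y := by
  have h' : x ≡ y [MOD m] := Nat.ModEq.add_left_cancel' t h
  calc x = x % m := (Nat.mod_eq_of_lt hx).symm
    _ = y % m := h'
    _ = y := Nat.mod_eq_of_lt hy

lemma mod_image (m : ℕ) (hm : 0 < m) (g : ℕ → ℕ)
    (hinj : ∀ i < m, ∀ j < m, g i % m = g j % m → i = j) :
    Finset.image (fun i => g i % m) (Finset.range m) = Finset.range m := by
  apply Finset.eq_of_subset_of_card_le
  · intro x hx
    simp only [Finset.mem_image, Finset.mem_range] at hx ⊢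
    obtain ⟨i, _, rfl⟩ := hx
    exact Nat.mod_lt _ hm
  · rw [Finset.card_range, Finset.card_image_of_injOn]
    · rw [Finset.card_range]
    · intro i hi j hj h
      exact hinj i (Finset.mem_range.mp hi) j (Finset.mem_range.mp hj) h

lemma xfun_lt_s16 (n i : ℕ) (hn : 0 < n) (hi : i < 2 * n) : xfun n i < 2 * n := by
  unfold xfun; split <;> omega

lemma xfun_inj (n i j : ℕ) (hi : i < 2 * n) (hj : j < 2 * n)
    (h : xfun n i = xfun n j) : i = j := by
  unfold xfun at h; split at h <;> split at h <;> omega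

lemma hY_lem (n a : ℕ) (ha : a < 2 * n) (i : ℕ) (hi : i < 2 * n) :
    (i + (a + 2 * n - i)) % (2 * n) = a := by
  have h : i + (a + 2 * n - i) = a + 2 * n := by omega
  rw [h, Nat.add_mod_right, Nat.mod_eq_of_lt ha]

lemma key_lem (n a : ℕ) (i : ℕ) (hi : i < 2 * n) :
    (xfun n i + (a + 2 * n - i)) % (2 * n)
      = (a + (if i < n then i + 1 else i)) % (2 * n) := by
  unfold xfun
  split
  · have h : 2 * i + 1 + (a + 2 * n - i) = (a + (i + 1)) + 2 * n := by omega
    rw [h, Nat.add_mod_right]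
  · have h : 2 * (i - n) + (a + 2 * n - i) = a + i := by omega
    rw [h]

lemma c_unique (n a : ℕ) (ha : a < 2 * n) (i c : ℕ) (hi : i < 2 * n) (hc : c < 2 * n)
    (h : (i + c) % (2 * n) = a) : c = (a + 2 * n - i) % (2 * n) := by
  have hm : 0 < 2 * n := by omega
  have h2 : (i + c) % (2 * n) = (i + (a + 2 * n - i) % (2 * n)) % (2 * n) := by
    rw [Nat.add_mod_mod, h, hY_lem n a ha i hi]
  exact cancel_left (2 * n) i c _ hc (Nat.mod_lt _ hm) h2

lemma pairCount_eq (n a : ℕ) (hn : 0 < n) (ha : a < 2 * n) (b : ℕ) :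
    pairCount n a b = ((Finset.range (2 * n)).filter
      (fun i => (a + (if i < n then i + 1 else i)) % (2 * n) = b)).card := by
  have hm : 0 < 2 * n := by omega
  unfold pairCount Ysq Zsq
  apply Finset.card_bij' (fun p _ => p.1)
    (fun i _ => (i, (a + 2 * n - i) % (2 * n)))
  · rintro ⟨i, c⟩ hp
    simp only [Finset.mem_filter, Finset.mem_product, Finset.mem_range] at hp ⊢
    obtain ⟨⟨hi, hc⟩, hya, hzb⟩ := hp
    refine ⟨hi, ?_⟩
    have hceq := c_unique n a ha i c hi hc hya
    rw [hceq, Nat.add_mod_mod, key_lem n a i hi] at hzb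
    exact hzb
  · intro i hi
    simp only [Finset.mem_filter, Finset.mem_range] at hi
    simp only [Finset.mem_filter, Finset.mem_product, Finset.mem_range]
    refine ⟨⟨hi.1, Nat.mod_lt _ hm⟩, ?_, ?_⟩
    · rw [Nat.add_mod_mod, hY_lem n a ha i hi.1]
    · rw [Nat.add_mod_mod, key_lem n a i hi.1]
      exact hi.2
  · rintro ⟨i, c⟩ hp
    simp only [Finset.mem_filter, Finset.mem_product, Finset.mem_range] at hp
    obtain ⟨⟨hi, hc⟩, hya, _⟩ := hp
    exact Prod.ext rfl (c_unique n a ha i c hi hc hya).symm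
  · intro i _; rfl

theorem stmt16 (n : ℕ) (hn : 2 ≤ n) :
    -- (i) Y and Z are Latin squares of order 2n:
    -- each symbol occurs exactly once in every row
    (∀ i ∈ Finset.range (2 * n),
      Finset.image (fun c => Ysq n i c) (Finset.range (2 * n)) = Finset.range (2 * n) ∧
      Finset.image (fun c => Zsq n i c) (Finset.range (2 * n)) = Finset.range (2 * n)) ∧
    -- and exactly once in every column
    (∀ c ∈ Finset.range (2 * n),
      Finset.image (fun i => Ysq n i c) (Finset.range (2 * n)) = Finset.range (2 * n) ∧
      Finset.image (fun i => Zsq n i c) (Finset.range (2 * n)) = Finset.range (2 * n)) ∧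
    -- (ii) Y and Z are pseudo-orthogonal: for every symbol a,
    (∀ a ∈ Finset.range (2 * n),
      -- a is never paired with a,
      pairCount n a a = 0 ∧
      -- a is paired with (a + n) mod 2n exactly twice,
      pairCount n a ((a + n) % (2 * n)) = 2 ∧
      -- and a is paired with every other symbol exactly once
      (∀ b ∈ Finset.range (2 * n), b ≠ a → b ≠ (a + n) % (2 * n) →
        pairCount n a b = 1)) := by
  have hm : 0 < 2 * n := by omega
  have hn0 : 0 < n := by omega
  have hdiff_lt : ∀ i < 2 * n, (if i < n then i + 1 else i) < 2 * n := by
    intro i hi; split <;> omega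
  refine ⟨?_, ?_, ?_⟩
  · -- rows
    intro i hi
    rw [Finset.mem_range] at hi
    constructor
    · exact mod_image (2 * n) hm (fun c => i + c)
        (fun c₁ h₁ c₂ h₂ h => cancel_left (2 * n) i c₁ c₂ h₁ h₂ h)
    · exact mod_image (2 * n) hm (fun c => xfun n i + c)
        (fun c₁ h₁ c₂ h₂ h => cancel_left (2 * n) (xfun n i) c₁ c₂ h₁ h₂ h)
  · -- columns
    intro c hc
    rw [Finset.mem_range] at hc
    constructor
    · apply mod_image (2 * n) hm (fun i => i + c)
      intro i hi j hj h
      rw [Nat.add_comm i c, Nat.add_comm j c] at h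
      exact cancel_left (2 * n) c i j hi hj h
    · apply mod_image (2 * n) hm (fun i => xfun n i + c)
      intro i hi j hj h
      rw [Nat.add_comm (xfun n i) c, Nat.add_comm (xfun n j) c] at h
      have hx : xfun n i = xfun n j :=
        cancel_left (2 * n) c _ _ (xfun_lt_s16 n i hn0 hi) (xfun_lt_s16 n j hn0 hj) h
      exact xfun_inj n i j hi hj hx
  · -- pseudo-orthogonality
    intro a ha
    rw [Finset.mem_range] at ha
    have hrw := pairCount_eq n a hn0 ha
    refine ⟨?_, ?_, ?_⟩
    · -- b = a : count 0
      rw [hrw a, Finset.card_eq_zero]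
      rw [Finset.filter_eq_empty_iff]
      intro i hi
      rw [Finset.mem_range] at hi
      intro h
      have h2 : (a + (if i < n then i + 1 else i)) % (2 * n) = (a + 0) % (2 * n) := by
        rw [h, Nat.add_zero, Nat.mod_eq_of_lt ha]
      have := cancel_left (2 * n) a _ 0 (hdiff_lt i hi) hm h2
      split at this <;> omega
    · -- b = (a+n) % 2n : count 2
      rw [hrw]
      have hset : (Finset.range (2 * n)).filter
          (fun i => (a + (if i < n then i + 1 else i)) % (2 * n) = (a + n) % (2 * n))
          = {n - 1, n} := by
        ext i
        simp only [Finset.mem_filter, Finset.mem_range, Finset.mem_insert,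
          Finset.mem_singleton]
        constructor
        · rintro ⟨hi, h⟩
          have := cancel_left (2 * n) a _ n (hdiff_lt i hi) (by omega) h
          split at this <;> omega
        · intro h
          have hi : i < 2 * n := by omega
          refine ⟨hi, ?_⟩
          have hd : (if i < n then i + 1 else i) = n := by split <;> omega
          rw [hd]
      rw [hset]
      rw [Finset.card_insert_of_notMem (by simp; omega), Finset.card_singleton]
    · -- other b : count 1
      intro b hb hba hbn
      rw [Finset.mem_range] at hb
      rw [hrw]
      set d := (b + 2 * n - a) % (2 * n) with hd_def
      have hdm : d < 2 * n := Nat.mod_lt _ hm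
      have hd1 : (a + d) % (2 * n) = b := by
        rw [hd_def, Nat.add_mod_mod]
        have h : a + (b + 2 * n - a) = b + 2 * n := by omega
        rw [h, Nat.add_mod_right, Nat.mod_eq_of_lt hb]
      have hd0 : d ≠ 0 := by
        intro h
        rw [h, Nat.add_zero, Nat.mod_eq_of_lt ha] at hd1
        exact hba hd1.symm
      have hdn : d ≠ n := by
        intro h
        rw [h] at hd1
        exact hbn hd1.symm
      have hsing : (Finset.range (2 * n)).filter
          (fun i => (a + (if i < n then i + 1 else i)) % (2 * n) = b)
          = {if d ≤ n then d - 1 else d} := by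
        ext i
        simp only [Finset.mem_filter, Finset.mem_range, Finset.mem_singleton]
        constructor
        · rintro ⟨hi, h⟩
          rw [← hd1] at h
          have := cancel_left (2 * n) a _ d (hdiff_lt i hi) hdm h
          split at this <;> split <;> omega
        · intro h
          subst h
          have hi : (if d ≤ n then d - 1 else d) < 2 * n := by split <;> omega
          refine ⟨hi, ?_⟩
          have hdd : (if (if d ≤ n then d - 1 else d) < n
              then (if d ≤ n then d - 1 else d) + 1
              else (if d ≤ n then d - 1 else d)) = d := by
            by_cases h1 : d ≤ n
            · rw [if_pos h1, if_pos (show d - 1 < n by omega)]; omega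
            · rw [if_neg h1, if_neg (show ¬ d < n by omega)]
          rw [hdd, hd1]
      rw [hsing, Finset.card_singleton]
end
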